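/- arXiv:2410.22820 — 6 statements merged into one kernel-verified Lean document; each statement's English description precedes it below -/
import Mathlib

section
/- Consider a family of PIN models with parameters (𝒜, ρ, P_α, φ_α) indexed by α > 0, with limit drifts D̄_α, on a sequence of interaction graphs G_n (G_n having n nodes and at least one link) with total mixing gaps W_{G_n} → 0 as n → ∞. Suppose there are twice continuously differentiable functions V_α : ℝ^𝒜 → ℝ for α > 0, a continuous nonnegative function h : P(𝒜) → ℝ₊, and a nonnegative function ζ : ℝ₊ → ℝ₊ with ζ(α) → 0 as α → 0, such that ∇V_α(θ)·D̄_α(θ) ≤ −h(θ) + ζ(α) for all θ ∈ P(𝒜) and all α > 0. For each α > 0 and each n ≥ 2, let μ_n^{(α)} be a stationary distribution of the PIN model with parameters (𝒜, ρ, P_α, φ_α) on G_n. Then for every δ > 0, lim_{α→0} liminf_{n→∞} μ_n^{(α)}({x : h(θ(x)) < δ}) = 1. -/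
open Finset Filter

noncomputable section

/-- The empirical type (state frequencies) of a configuration. -/
def confType {V A : Type*} [Fintype V] [DecidableEq A] (x : V → A) (i : A) : ℝ :=
  ((Finset.univ.filter fun v => x v = i).card : ℝ) / (Fintype.card V : ℝ)

/-- The boundary (empirical link-pair frequencies) of a configuration. -/
def boundary {V A : Type*} [DecidableEq A] (E : Finset (V × V)) (x : V → A) (i j : A) : ℝ :=
  ((E.filter fun e => x e.1 = i ∧ x e.2 = j).card : ℝ) / (E.card : ℝ)

/-- Off-diagonal part of the PIN transition matrix. -/
def Toff {V A : Type*} [Fintype V] [DecidableEq V] [DecidableEq A]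
    (E : Finset (V × V)) (ρ : ℝ) (P : A → A → ℝ) (φ : A → A → A → ℝ) (x y : V → A) : ℝ :=
  if (Finset.univ.filter fun v => x v ≠ y v).card = 1 then
    ∑ u ∈ Finset.univ.filter fun v => x v ≠ y v,
      ((1 - ρ) * (1 / (Fintype.card V : ℝ)) * P (x u) (y u)
        + (ρ / (E.card : ℝ)) * ∑ e ∈ E.filter fun e => e.1 = u, φ (x u) (y u) (x e.2))
  else 0

/-- The PIN transition matrix. -/
def pinTrans {V A : Type*} [Fintype V] [DecidableEq V] [Fintype A] [DecidableEq A]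
    (E : Finset (V × V)) (ρ : ℝ) (P : A → A → ℝ) (φ : A → A → A → ℝ) (x y : V → A) : ℝ :=
  if x = y then 1 - ∑ z : V → A, Toff E ρ P φ x z else Toff E ρ P φ x y

/-- The mean drift of the PIN model. -/
def meanDrift {V A : Type*} [Fintype V] [DecidableEq V] [Fintype A] [DecidableEq A]
    (E : Finset (V × V)) (ρ : ℝ) (P : A → A → ℝ) (φ : A → A → A → ℝ) (x : V → A) (i : A) : ℝ :=
  (Fintype.card V : ℝ) * ∑ y : V → A, pinTrans E ρ P φ x y * (confType y i - confType x i)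

/-- The limit drift of the PIN model. -/
def limitDrift {A : Type*} [Fintype A] (ρ : ℝ) (P : A → A → ℝ) (φ : A → A → A → ℝ)
    (θ : A → ℝ) (i : A) : ℝ :=
  ((1 - ρ) * ∑ j, P j i * θ j) + (ρ * ∑ ℓ, θ ℓ * ∑ j, φ j i ℓ * θ j) - θ i

/-- The linear operator Q acting on boundaries. -/
def Qop {A : Type*} [Fintype A] (φ : A → A → A → ℝ) (ξ : A → A → ℝ) (i : A) : ℝ :=
  (∑ ℓ, ∑ j, ξ j ℓ * φ j i ℓ) - ∑ ℓ, ξ i ℓ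

/-- Membership in the probability simplex over `A`. -/
def inSimplex {A : Type*} [Fintype A] (θ : A → ℝ) : Prop :=
  (∀ i, 0 ≤ θ i) ∧ ∑ i, θ i = 1

/-- The hypotheses on the parameters of a PIN model: `ρ ∈ [0,1]`, `P` and each `φ(ℓ)`
row-stochastic and nonnegative, the interaction graph nonempty and without self-loops. -/
def IsPinModel {V A : Type*} [Fintype A] (E : Finset (V × V)) (ρ : ℝ)
    (P : A → A → ℝ) (φ : A → A → A → ℝ) : Prop :=
  0 ≤ ρ ∧ ρ ≤ 1 ∧ (∀ i j, 0 ≤ P i j) ∧ (∀ i, ∑ j, P i j = 1) ∧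
    (∀ i j ℓ, 0 ≤ φ i j ℓ) ∧ (∀ i ℓ, ∑ j, φ i j ℓ = 1) ∧
    E.Nonempty ∧ ∀ e ∈ E, e.1 ≠ e.2

/-- Stationary distribution of a PIN model. -/
def IsStationaryPin {V A : Type*} [Fintype V] [DecidableEq V] [Fintype A] [DecidableEq A]
    (E : Finset (V × V)) (ρ : ℝ) (P : A → A → ℝ) (φ : A → A → A → ℝ)
    (μ : (V → A) → ℝ) : Prop :=
  (∀ x, 0 ≤ μ x) ∧ (∑ x : V → A, μ x = 1) ∧
    ∀ y : V → A, ∑ x : V → A, μ x * pinTrans E ρ P φ x y = μ y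

/-- The total mixing gap of a graph. -/
def mixingGap {V : Type*} [Fintype V] [DecidableEq V] (E : Finset (V × V)) : ℝ :=
  sSup {w : ℝ | ∃ S U : Finset V, Disjoint S U ∧
    w = |((E.filter fun e => e.1 ∈ S ∧ e.2 ∈ U).card : ℝ) / (E.card : ℝ) -
      ((S.card : ℝ) * (U.card : ℝ)) / ((Fintype.card V : ℝ) * ((Fintype.card V : ℝ) - 1))|}

open Classical in
/-- Total `μ`-mass of the set of configurations satisfying `p`. -/
def massOf {X : Type*} [Fintype X] (μ : X → ℝ) (p : X → Prop) : ℝ :=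
  ∑ x, if p x then μ x else 0

/-!
Stationarity makes the expected one-step increment of `W_α ∘ θ` vanish. A second-order Taylor
expansion writes this increment at `x` as `(1/n) ∇W_α(θ(x)) · D(x) + O(1/n²)`, where the mean
drift `D(x)` differs from the limit drift `D̄_α(θ(x))` only through the replacement of the link-pair
frequencies `ξ(x)` by `θ(x) ⊗ θ(x)`. The mixing gap bounds that error by `4 W_G + 1/(n - 1)`, so the
Lyapunov inequality gives `E_μ[h(θ)] ≤ ζ(α) + O(W_{G_n} + 1/n)`, and Markov's inequality yields
`μ(h(θ) ≥ δ) ≤ ζ(α)/δ` in the limit `n → ∞`.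
-/

section FiniteMarkovChain
variable {X : Type*} [Fintype X]

lemma sum_mul_sum_mul_sub_eq_zero_of_stationary {K : X → X → ℝ} {μ : X → ℝ}
    (hK : ∀ x, ∑ y, K x y = 1) (hμ : ∀ y, ∑ x, μ x * K x y = μ y) (F : X → ℝ) :
    ∑ x, μ x * ∑ y, K x y * (F y - F x) = 0 := by
  simp_rw [mul_sub, sum_sub_distrib, ← sum_mul, hK, one_mul, mul_sub, sum_sub_distrib, mul_sum,
    ← mul_assoc]
  rw [sum_comm]
  simp_rw [← sum_mul, hμ, sub_self]

lemma massOf_le_one {μ : X → ℝ} (hμ0 : ∀ x, 0 ≤ μ x) (hμ1 : ∑ x, μ x = 1) (p : X → Prop) :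
    massOf μ p ≤ 1 :=
  hμ1 ▸ sum_le_sum fun x _ => by split_ifs <;> simp [hμ0 x]

lemma one_sub_div_le_massOf {μ : X → ℝ} (hμ0 : ∀ x, 0 ≤ μ x) (hμ1 : ∑ x, μ x = 1)
    {F : X → ℝ} (hF : ∀ x, 0 ≤ F x) {δ : ℝ} (hδ : 0 < δ) :
    1 - (∑ x, μ x * F x) / δ ≤ massOf μ fun x => F x < δ := by
  rw [sub_le_iff_le_add, ← hμ1, massOf, sum_div, ← sum_add_distrib]
  refine sum_le_sum fun x _ => ?_
  split_ifs with hx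
  · have := mul_nonneg (hμ0 x) (hF x)
    linarith [div_nonneg this hδ.le]
  · rw [zero_add, le_div_iff₀ hδ]
    exact mul_le_mul_of_nonneg_left (not_lt.mp hx) (hμ0 x)

end FiniteMarkovChain

lemma ContDiff.exists_norm_sub_sub_fderiv_le {E F : Type*} [NormedAddCommGroup E]
    [NormedSpace ℝ E] [NormedAddCommGroup F] [NormedSpace ℝ F] {f : E → F}
    (hf : ContDiff ℝ 2 f) {K : Set E} (hK : IsCompact K) (hKc : Convex ℝ K) :
    ∃ M, 0 ≤ M ∧ ∀ a ∈ K, ∀ b ∈ K, ‖f b - f a - fderiv ℝ f a (b - a)‖ ≤ M * ‖b - a‖ ^ 2 := by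
  have hf' : ContDiff ℝ 1 (fderiv ℝ f) := hf.fderiv_right (by norm_num)
  obtain ⟨M, hM⟩ := hK.exists_bound_of_continuousOn (hf'.continuous_fderiv one_ne_zero).continuousOn
  refine ⟨max M 0, le_max_right _ _, fun a ha b hb => ?_⟩
  have hlip : ∀ z ∈ K, ‖fderiv ℝ f z - fderiv ℝ f a‖ ≤ max M 0 * ‖z - a‖ := fun z hz =>
    hKc.norm_image_sub_le_of_norm_fderiv_le (fun w _ => (hf'.differentiable one_ne_zero) w)
      (fun w hw => (hM w hw).trans (le_max_left _ _)) ha hz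
  have hseg : ∀ z ∈ segment ℝ a b, ‖fderiv ℝ f z - fderiv ℝ f a‖ ≤ max M 0 * ‖b - a‖ :=
    fun z hz => (hlip z (hKc.segment_subset ha hb hz)).trans <| by
      gcongr
      rw [← dist_eq_norm, ← dist_eq_norm, dist_comm z, dist_comm b]
      exact (le_add_of_nonneg_right dist_nonneg).trans_eq (dist_add_dist_of_mem_segment hz)
  calc ‖f b - f a - fderiv ℝ f a (b - a)‖ ≤ max M 0 * ‖b - a‖ * ‖b - a‖ :=
        (convex_segment a b).norm_image_sub_le_of_norm_fderiv_le'
          (fun z _ => (hf.differentiable (by norm_num)) z) hseg (left_mem_segment ℝ a b)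
          (right_mem_segment ℝ a b)
    _ = max M 0 * ‖b - a‖ ^ 2 := by ring

section Bipartitions
variable {V : Type*} [DecidableEq V]

lemma card_powerset_filter_mem_notMem {S : Finset V} {a b : V} (ha : a ∈ S) (hb : b ∈ S)
    (hab : a ≠ b) : #(S.powerset.filter fun T => a ∈ T ∧ b ∉ T) = 2 ^ (#S - 2) := by
  have hcard : #((S.erase a).erase b).powerset = 2 ^ (#S - 2) := by
    rw [card_powerset, card_erase_of_mem (mem_erase.mpr ⟨hab.symm, hb⟩), card_erase_of_mem ha]
    rfl
  rw [← hcard]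
  refine card_bij' (fun T _ => T.erase a) (fun R _ => insert a R) ?_ ?_ ?_ ?_
  · intro T hT
    simp only [mem_filter, mem_powerset] at hT ⊢
    intro v hv
    obtain ⟨hva, hvT⟩ := mem_erase.mp hv
    exact mem_erase.mpr ⟨fun h => hT.2.2 (h ▸ hvT), mem_erase.mpr ⟨hva, hT.1 hvT⟩⟩
  · intro R hR
    rw [mem_powerset] at hR
    simp only [mem_filter, mem_powerset, mem_insert_self, true_and, mem_insert, not_or]
    refine ⟨insert_subset ha fun v hv => mem_of_mem_erase (mem_of_mem_erase (hR hv)),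
      hab.symm, fun hbR => (mem_erase.mp (hR hbR)).1 rfl⟩
  · intro T hT
    exact insert_erase (mem_filter.mp hT).2.1
  · intro R hR
    exact erase_insert fun haR => (mem_erase.mp (mem_of_mem_erase (mem_powerset.mp hR haR))).1 rfl

lemma sum_powerset_card_filter_cut {S : Finset V} (R : Finset (V × V))
    (hR : ∀ p ∈ R, p.1 ∈ S ∧ p.2 ∈ S ∧ p.1 ≠ p.2) :
    ∑ T ∈ S.powerset, #(R.filter fun p => p.1 ∈ T ∧ p.2 ∉ T) = 2 ^ (#S - 2) * #R := by
  simp_rw [card_filter]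
  rw [sum_comm, card_eq_sum_ones R, mul_sum, mul_one]
  refine sum_congr rfl fun p hp => ?_
  obtain ⟨h1, h2, h12⟩ := hR p hp
  rw [← card_filter, card_powerset_filter_mem_notMem h1 h2 h12]

lemma filter_mem_mem_sdiff_eq {S T : Finset V} (hT : T ⊆ S) (R : Finset (V × V)) :
    (R.filter fun p => p.1 ∈ T ∧ p.2 ∈ S \ T) =
      (R.filter fun p => p.1 ∈ S ∧ p.2 ∈ S).filter fun p => p.1 ∈ T ∧ p.2 ∉ T := by
  rw [filter_filter]
  refine filter_congr fun p _ => ?_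
  rw [Finset.mem_sdiff]
  exact ⟨fun ⟨h1, h2, h3⟩ => ⟨⟨hT h1, h2⟩, h1, h3⟩, fun ⟨⟨_, h2⟩, h1, h3⟩ => ⟨h1, h2, h3⟩⟩

lemma card_mul_card_sdiff_eq {S T : Finset V} (hT : T ⊆ S) :
    #T * #(S \ T) = #(S.offDiag.filter fun p => p.1 ∈ T ∧ p.2 ∉ T) := by
  rw [← card_product]
  congr 1
  ext p
  simp only [mem_product, mem_filter, mem_offDiag, Finset.mem_sdiff]
  exact ⟨fun ⟨h1, h2, h3⟩ => ⟨⟨hT h1, h2, fun h => h3 (h ▸ h1)⟩, h1, h3⟩,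
    fun ⟨⟨_, h2, _⟩, h1, h3⟩ => ⟨h1, h2, h3⟩⟩

lemma sum_powerset_card_filter_mem_mem_sdiff (R : Finset (V × V)) (hloop : ∀ p ∈ R, p.1 ≠ p.2)
    (S : Finset V) :
    ∑ T ∈ S.powerset, #(R.filter fun p => p.1 ∈ T ∧ p.2 ∈ S \ T) =
      2 ^ (#S - 2) * #(R.filter fun p => p.1 ∈ S ∧ p.2 ∈ S) := by
  rw [sum_congr rfl fun T hT => by rw [filter_mem_mem_sdiff_eq (mem_powerset.mp hT)]]
  refine sum_powerset_card_filter_cut _ fun p hp => ?_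
  obtain ⟨hp, h1, h2⟩ := mem_filter.mp hp
  exact ⟨h1, h2, hloop p hp⟩

lemma sum_powerset_card_mul_card_sdiff (S : Finset V) :
    ∑ T ∈ S.powerset, #T * #(S \ T) = 2 ^ (#S - 2) * (#S * #S - #S) := by
  rw [sum_congr rfl fun T hT => card_mul_card_sdiff_eq (mem_powerset.mp hT), ← offDiag_card]
  exact sum_powerset_card_filter_cut _ fun p hp => mem_offDiag.mp hp

end Bipartitions

section MixingGap
variable {V : Type*} [Fintype V] [DecidableEq V]

lemma abs_cut_sub_le_mixingGap (E : Finset (V × V)) {S U : Finset V} (hSU : Disjoint S U) :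
    |(#(E.filter fun e => e.1 ∈ S ∧ e.2 ∈ U) : ℝ) / #E -
      (#S * #U : ℝ) / ((Fintype.card V : ℝ) * ((Fintype.card V : ℝ) - 1))| ≤ mixingGap E := by
  refine le_csSup ?_ ⟨S, U, hSU, rfl⟩
  refine (Set.finite_range fun p : Finset V × Finset V =>
    |(#(E.filter fun e => e.1 ∈ p.1 ∧ e.2 ∈ p.2) : ℝ) / #E -
      (#p.1 * #p.2 : ℝ) / ((Fintype.card V : ℝ) * ((Fintype.card V : ℝ) - 1))|).bddAbove.mono ?_
  rintro w ⟨S, U, -, rfl⟩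
  exact ⟨(S, U), rfl⟩

lemma mixingGap_nonneg (E : Finset (V × V)) : 0 ≤ mixingGap E :=
  (abs_nonneg _).trans (abs_cut_sub_le_mixingGap E (disjoint_empty_left ∅))

/-- Averaging the cut estimate over the bipartitions `(T, S \ T)` of `S` works because every
off-diagonal pair of `S` is cut by a quarter of them. -/
lemma abs_diag_sub_le_four_mul_mixingGap (E : Finset (V × V)) (hloop : ∀ e ∈ E, e.1 ≠ e.2)
    (S : Finset V) :
    |(#(E.filter fun e => e.1 ∈ S ∧ e.2 ∈ S) : ℝ) / #E -
      (#S * (#S - 1) : ℝ) / ((Fintype.card V : ℝ) * ((Fintype.card V : ℝ) - 1))|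
      ≤ 4 * mixingGap E := by
  set N : ℝ := (Fintype.card V : ℝ) * ((Fintype.card V : ℝ) - 1)
  set ESS := E.filter fun e => e.1 ∈ S ∧ e.2 ∈ S
  have hcutE : ∑ T ∈ S.powerset, (#(E.filter fun e => e.1 ∈ T ∧ e.2 ∈ S \ T) : ℝ) =
      2 ^ (#S - 2) * #ESS := by
    exact_mod_cast sum_powerset_card_filter_mem_mem_sdiff E hloop S
  have hcutS : ∑ T ∈ S.powerset, (#T * #(S \ T) : ℝ) = 2 ^ (#S - 2) * (#S * (#S - 1)) := by
    rw [mul_sub_one, ← Nat.cast_mul, ← Nat.cast_sub (Nat.le_mul_self _)]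
    exact_mod_cast sum_powerset_card_mul_card_sdiff S
  have hsum : (2 ^ (#S - 2) : ℝ) * ((#ESS : ℝ) / #E - (#S * (#S - 1) : ℝ) / N) =
      ∑ T ∈ S.powerset, ((#(E.filter fun e => e.1 ∈ T ∧ e.2 ∈ S \ T) : ℝ) / #E -
        (#T * #(S \ T) : ℝ) / N) := by
    rw [sum_sub_distrib, ← sum_div, ← sum_div, hcutE, hcutS]
    ring
  have hpow : (2 : ℝ) ^ #S ≤ 4 * 2 ^ (#S - 2) := by
    rw [show (4 : ℝ) = 2 ^ 2 by norm_num, ← pow_add]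
    exact pow_le_pow_right₀ one_le_two (by omega)
  have hW := mixingGap_nonneg E
  refine le_of_mul_le_mul_left ?_ (by positivity : (0 : ℝ) < 2 ^ (#S - 2))
  calc (2 ^ (#S - 2) : ℝ) * |(#ESS : ℝ) / #E - (#S * (#S - 1) : ℝ) / N|
      = |∑ T ∈ S.powerset, ((#(E.filter fun e => e.1 ∈ T ∧ e.2 ∈ S \ T) : ℝ) / #E -
          (#T * #(S \ T) : ℝ) / N)| := by
        rw [← hsum, abs_mul, abs_of_pos (by positivity : (0 : ℝ) < 2 ^ (#S - 2))]
    _ ≤ ∑ T ∈ S.powerset, mixingGap E :=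
        (abs_sum_le_sum_abs _ _).trans
          (sum_le_sum fun T _ => abs_cut_sub_le_mixingGap E disjoint_sdiff)
    _ = 2 ^ #S * mixingGap E := by
        rw [sum_const, card_powerset, nsmul_eq_mul, Nat.cast_pow, Nat.cast_ofNat]
    _ ≤ 2 ^ (#S - 2) * (4 * mixingGap E) := by nlinarith

end MixingGap

section ConfigurationType
variable {V A : Type*}

lemma confType_nonneg [Fintype V] [DecidableEq A] (x : V → A) (i : A) : 0 ≤ confType x i := by
  unfold confType
  positivity

lemma sum_comp_eq_card_mul_sum_confType [Fintype V] [Fintype A] [DecidableEq A]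
    (hn : 0 < Fintype.card V) (x : V → A) (F : A → ℝ) :
    ∑ v, F (x v) = Fintype.card V * ∑ j, confType x j * F j := by
  have hn' : (Fintype.card V : ℝ) ≠ 0 := by positivity
  rw [← sum_fiberwise univ x fun v => F (x v), mul_sum]
  refine sum_congr rfl fun j _ => ?_
  rw [sum_congr rfl fun v hv => by rw [(mem_filter.mp hv).2], sum_const, nsmul_eq_mul, confType]
  field_simp

lemma sum_confType [Fintype V] [Fintype A] [DecidableEq A] (hn : 0 < Fintype.card V)
    (x : V → A) : ∑ i, confType x i = 1 := by
  have := sum_comp_eq_card_mul_sum_confType hn x fun _ => 1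
  simp only [sum_const, card_univ, nsmul_eq_mul, mul_one] at this
  exact (mul_eq_left₀ (by positivity)).mp this.symm

lemma confType_mem_stdSimplex [Fintype V] [Fintype A] [DecidableEq A]
    (hn : 0 < Fintype.card V) (x : V → A) :
    confType x ∈ stdSimplex ℝ A :=
  ⟨confType_nonneg x, sum_confType hn x⟩

lemma confType_update_sub [Fintype V] [DecidableEq V] [DecidableEq A] (x : V → A) (u : V)
    (b i : A) :
    confType (Function.update x u b) i - confType x i =
      ((if b = i then 1 else 0) - (if x u = i then 1 else 0)) / Fintype.card V := by
  unfold confType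
  rw [← sub_div, natCast_card_filter, natCast_card_filter]
  congr 1
  simp_rw [Function.apply_update (fun _ a => if a = i then (1 : ℝ) else 0) x u b]
  rw [sum_update_of_mem (mem_univ u), sum_eq_add_sum_sdiff_singleton_of_mem (mem_univ u)]
  ring

lemma norm_confType_update_sub_le [Fintype V] [DecidableEq V] [Fintype A] [DecidableEq A]
    (hn : 0 < Fintype.card V) (x : V → A) (u : V) (b : A) :
    ‖confType (Function.update x u b) - confType x‖ ≤ 1 / Fintype.card V := by
  rw [pi_norm_le_iff_of_nonneg (by positivity)]
  intro i
  rw [Pi.sub_apply, Real.norm_eq_abs, confType_update_sub, abs_div, Nat.abs_cast]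
  gcongr
  split_ifs <;> norm_num

lemma sum_edges_eq_card_mul_sum_boundary [Fintype A] [DecidableEq A] (E : Finset (V × V))
    (hE : E.Nonempty) (x : V → A) (G : A → A → ℝ) :
    ∑ e ∈ E, G (x e.1) (x e.2) = #E * ∑ ℓ, ∑ j, boundary E x j ℓ * G j ℓ := by
  have hm : (#E : ℝ) ≠ 0 := by exact_mod_cast hE.card_pos.ne'
  rw [← sum_fiberwise E (fun e => (x e.2, x e.1)) fun e => G (x e.1) (x e.2),
    Fintype.sum_prod_type, mul_sum]
  refine sum_congr rfl fun ℓ _ => ?_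
  rw [mul_sum]
  refine sum_congr rfl fun j _ => ?_
  have hfib : (E.filter fun e => (x e.2, x e.1) = (ℓ, j)) =
      E.filter fun e => x e.1 = j ∧ x e.2 = ℓ :=
    filter_congr fun e _ => by rw [Prod.mk.injEq, and_comm]
  rw [hfib, sum_congr rfl fun e he => by rw [(mem_filter.mp he).2.1, (mem_filter.mp he).2.2],
    sum_const, nsmul_eq_mul, boundary]
  field_simp

end ConfigurationType

lemma abs_mul_sub_div_sub_div_mul_div_le {n s u c : ℝ} (hn : 2 ≤ n) (hs : 0 ≤ s) (hsn : s ≤ n)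
    (hu : 0 ≤ u) (hun : u ≤ n) (hc0 : 0 ≤ c) (hc1 : c ≤ 1) :
    |s * (u - c) / (n * (n - 1)) - s / n * (u / n)| ≤ 1 / (n - 1) := by
  have hn1 : 0 < n - 1 := by linarith
  have hkey : s * (u - c) / (n * (n - 1)) - s / n * (u / n) =
      s * (u - c * n) / (n ^ 2 * (n - 1)) := by
    field_simp
    ring
  have habs : |u - c * n| ≤ n := abs_le.mpr ⟨by nlinarith, by nlinarith⟩
  rw [hkey, abs_div, abs_mul, abs_of_nonneg hs, abs_of_pos (mul_pos (by positivity) hn1),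
    div_le_div_iff₀ (by positivity) hn1]
  nlinarith [mul_le_mul hsn habs (abs_nonneg _) (by linarith)]

section Boundary
variable {V A : Type*} [Fintype V] [DecidableEq V] [DecidableEq A]

lemma abs_boundary_sub_confType_mul_le (E : Finset (V × V)) (hloop : ∀ e ∈ E, e.1 ≠ e.2)
    (hn : 2 ≤ Fintype.card V) (x : V → A) (j ℓ : A) :
    |boundary E x j ℓ - confType x j * confType x ℓ|
      ≤ 4 * mixingGap E + 1 / ((Fintype.card V : ℝ) - 1) := by
  set n : ℝ := (Fintype.card V : ℝ)
  set S := univ.filter fun v => x v = j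
  set U := univ.filter fun v => x v = ℓ
  set c : ℝ := if j = ℓ then 1 else 0
  have hξ : boundary E x j ℓ = (#(E.filter fun e => e.1 ∈ S ∧ e.2 ∈ U) : ℝ) / #E := by
    simp only [boundary, S, U, mem_filter, mem_univ, true_and]
  have hgap : |boundary E x j ℓ - #S * (#U - c) / (n * (n - 1))| ≤ 4 * mixingGap E := by
    rw [hξ]
    by_cases hjℓ : j = ℓ
    · subst hjℓ
      simpa [c] using abs_diag_sub_le_four_mul_mixingGap E hloop S
    · have hSU : Disjoint S U := disjoint_filter.mpr fun v _ hv hv' => hjℓ (hv ▸ hv')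
      simpa [c, hjℓ] using (abs_cut_sub_le_mixingGap E hSU).trans
        (le_mul_of_one_le_left (mixingGap_nonneg E) (by norm_num))
  have hS : (#S : ℝ) ≤ n := by simp only [n]; exact_mod_cast card_le_univ S
  have hU : (#U : ℝ) ≤ n := by simp only [n]; exact_mod_cast card_le_univ U
  have hn2 : (2 : ℝ) ≤ n := by simp only [n]; exact_mod_cast hn
  have hc1 : c ≤ 1 := by simp only [c]; split_ifs <;> norm_num
  have hprod := abs_mul_sub_div_sub_div_mul_div_le hn2 (Nat.cast_nonneg _) hS (Nat.cast_nonneg _)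
    hU (by positivity) hc1
  calc |boundary E x j ℓ - confType x j * confType x ℓ|
      ≤ |boundary E x j ℓ - #S * (#U - c) / (n * (n - 1))|
        + |#S * (#U - c) / (n * (n - 1)) - confType x j * confType x ℓ| := abs_sub_le _ _ _
    _ ≤ 4 * mixingGap E + 1 / (n - 1) := add_le_add hgap hprod

end Boundary

section Transitions
variable {V A : Type*} (E : Finset (V × V)) (ρ : ℝ) (P : A → A → ℝ) (φ : A → A → A → ℝ)

def pinRate [Fintype V] [DecidableEq V] (x : V → A) (u : V) (b : A) : ℝ :=
  (1 - ρ) * (1 / (Fintype.card V : ℝ)) * P (x u) b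
    + (ρ / #E) * ∑ e ∈ E.filter fun e => e.1 = u, φ (x u) b (x e.2)

lemma pinRate_nonneg [Fintype V] [DecidableEq V] (hρ0 : 0 ≤ ρ) (hρ1 : ρ ≤ 1) (hP : ∀ a b, 0 ≤ P a b)
    (hφ : ∀ a b ℓ, 0 ≤ φ a b ℓ) (x : V → A) (u : V) (b : A) : 0 ≤ pinRate E ρ P φ x u b := by
  unfold pinRate
  have hφsum : 0 ≤ ∑ e ∈ E.filter fun e => e.1 = u, φ (x u) b (x e.2) :=
    sum_nonneg fun e _ => hφ _ _ _
  exact add_nonneg (mul_nonneg (mul_nonneg (by linarith) (by positivity)) (hP _ _))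
    (mul_nonneg (by positivity) hφsum)

lemma sum_pinRate [Fintype V] [DecidableEq V] [Fintype A] (hP : ∀ a, ∑ b, P a b = 1)
    (hφ : ∀ a ℓ, ∑ b, φ a b ℓ = 1) (x : V → A) (u : V) :
    ∑ b, pinRate E ρ P φ x u b =
      (1 - ρ) * (1 / (Fintype.card V : ℝ)) + ρ / #E * #(E.filter fun e => e.1 = u) := by
  simp only [pinRate, sum_add_distrib, ← mul_sum, hP, mul_one]
  rw [sum_comm, sum_congr rfl fun e _ => hφ (x u) (x e.2), sum_const, nsmul_one]

lemma sum_sum_pinRate [Fintype V] [DecidableEq V] [Fintype A] (hn : 0 < Fintype.card V)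
    (hE : E.Nonempty) (hP : ∀ a, ∑ b, P a b = 1) (hφ : ∀ a ℓ, ∑ b, φ a b ℓ = 1) (x : V → A) :
    ∑ u, ∑ b, pinRate E ρ P φ x u b = 1 := by
  have hn' : (Fintype.card V : ℝ) ≠ 0 := by positivity
  have hm : (#E : ℝ) ≠ 0 := by exact_mod_cast hE.card_pos.ne'
  have hdeg : ∑ u, (#(E.filter fun e => e.1 = u) : ℝ) = #E := by
    exact_mod_cast
      (card_eq_sum_card_fiberwise (f := Prod.fst) (t := univ) fun e _ => mem_univ e.1).symm
  simp only [sum_pinRate E ρ P φ hP hφ, sum_add_distrib, ← mul_sum, hdeg, sum_const, card_univ,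
    nsmul_eq_mul]
  field_simp
  ring

variable [Fintype V] [DecidableEq V] [DecidableEq A]

lemma toff_self (x : V → A) : Toff E ρ P φ x x = 0 := by
  simp [Toff]

lemma filter_ne_update_eq {x : V → A} {u : V} {b : A} (hb : b ≠ x u) :
    (univ.filter fun v => x v ≠ Function.update x u b v) = {u} := by
  ext v
  rcases eq_or_ne v u with rfl | hv
  · simp [hb.symm]
  · simp [hv]

lemma toff_update {x : V → A} {u : V} {b : A} (hb : b ≠ x u) :
    Toff E ρ P φ x (Function.update x u b) = pinRate E ρ P φ x u b := by
  simp [Toff, filter_ne_update_eq hb, pinRate]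

lemma exists_eq_update_of_toff_ne_zero {x y : V → A} (hy : Toff E ρ P φ x y ≠ 0) :
    ∃ u, y u ≠ x u ∧ y = Function.update x u (y u) := by
  obtain ⟨u, hu⟩ := card_eq_one.mp (of_not_not fun h => hy (if_neg h))
  have hdiff : ∀ v, x v ≠ y v ↔ v = u := fun v => by
    simpa using congrArg (v ∈ ·) hu
  refine ⟨u, fun h => (hdiff u).mpr rfl h.symm, funext fun v => ?_⟩
  rcases eq_or_ne v u with rfl | hv
  · simp
  · rw [Function.update_of_ne hv]
    exact (not_not.mp (mt (hdiff v).mp hv)).symm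

variable [Fintype A]

lemma sum_pinTrans (x : V → A) : ∑ y, pinTrans E ρ P φ x y = 1 := by
  have hsplit : ∀ y, pinTrans E ρ P φ x y =
      Toff E ρ P φ x y + if x = y then 1 - ∑ z, Toff E ρ P φ x z else 0 := fun y => by
    by_cases hxy : x = y
    · subst hxy
      simp [pinTrans, toff_self]
    · simp [pinTrans, hxy]
  simp [hsplit, sum_add_distrib]

lemma sum_pinTrans_mul_eq_sum_pinRate (x : V → A) (c : (V → A) → ℝ) (hc : c x = 0) :
    ∑ y, pinTrans E ρ P φ x y * c y =
      ∑ u, ∑ b, pinRate E ρ P φ x u b * c (Function.update x u b) := by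
  have hoff : ∀ y, pinTrans E ρ P φ x y * c y = Toff E ρ P φ x y * c y := fun y => by
    by_cases hxy : x = y
    · subst hxy
      simp [hc]
    · simp [pinTrans, hxy]
  rw [sum_congr rfl fun y _ => hoff y, ← Fintype.sum_prod_type']
  have hne : ∀ p : V × A, pinRate E ρ P φ x p.1 p.2 * c (Function.update x p.1 p.2) ≠ 0 →
      p.2 ≠ x p.1 := fun p hp hpx => hp (by rw [hpx, Function.update_eq_self, hc, mul_zero])
  refine (sum_bij_ne_zero (fun p _ _ => Function.update x p.1 p.2) (fun _ _ _ => mem_univ _)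
    ?_ ?_ ?_).symm
  · rintro ⟨u, b⟩ - hub ⟨u', b'⟩ - hub' heq
    have hb := hne _ hub
    have hb' := hne _ hub'
    dsimp only at heq hb hb'
    obtain rfl : u = u' := by
      by_contra huu
      have := congrFun heq u
      rw [Function.update_self, Function.update_of_ne huu] at this
      exact hb this
    simpa using congrFun heq u
  · intro y _ hy
    obtain ⟨u, hu, hyu⟩ := exists_eq_update_of_toff_ne_zero E ρ P φ (left_ne_zero_of_mul hy)
    refine ⟨(u, y u), mem_univ _, ?_, hyu.symm⟩
    rwa [← toff_update E ρ P φ hu, ← hyu]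
  · rintro ⟨u, b⟩ - hub
    rw [toff_update E ρ P φ (hne _ hub)]

lemma abs_sum_pinTrans_mul_le (hρ0 : 0 ≤ ρ) (hρ1 : ρ ≤ 1) (hP0 : ∀ a b, 0 ≤ P a b)
    (hP : ∀ a, ∑ b, P a b = 1) (hφ0 : ∀ a b ℓ, 0 ≤ φ a b ℓ) (hφ : ∀ a ℓ, ∑ b, φ a b ℓ = 1)
    (hn : 0 < Fintype.card V) (hE : E.Nonempty) (x : V → A) (c : (V → A) → ℝ) (hc : c x = 0)
    {C : ℝ} (hC : ∀ u b, |c (Function.update x u b)| ≤ C) :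
    |∑ y, pinTrans E ρ P φ x y * c y| ≤ C := by
  have hrate := pinRate_nonneg E ρ P φ hρ0 hρ1 hP0 hφ0 x
  rw [sum_pinTrans_mul_eq_sum_pinRate E ρ P φ x c hc]
  calc |∑ u, ∑ b, pinRate E ρ P φ x u b * c (Function.update x u b)|
      ≤ ∑ u, ∑ b, pinRate E ρ P φ x u b * C := by
        refine (abs_sum_le_sum_abs _ _).trans (sum_le_sum fun u _ => ?_)
        refine (abs_sum_le_sum_abs _ _).trans (sum_le_sum fun b _ => ?_)
        rw [abs_mul, abs_of_nonneg (hrate u b)]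
        exact mul_le_mul_of_nonneg_left (hC u b) (hrate u b)
    _ = C := by simp_rw [← sum_mul]; rw [sum_sum_pinRate E ρ P φ hn hE hP hφ x, one_mul]

end Transitions

section Drift
variable {A : Type*} [Fintype A] (ρ : ℝ) (P : A → A → ℝ) (φ : A → A → A → ℝ)

lemma Qop_sub (ξ η : A → A → ℝ) (i : A) : Qop φ ξ i - Qop φ η i = Qop φ (ξ - η) i := by
  simp only [Qop, Pi.sub_apply, sub_mul, sum_sub_distrib]
  ring

lemma abs_Qop_le (hφ0 : ∀ a b ℓ, 0 ≤ φ a b ℓ) (hφ : ∀ a ℓ, ∑ b, φ a b ℓ = 1)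
    {η : A → A → ℝ} {ε : ℝ} (hη : ∀ j ℓ, |η j ℓ| ≤ ε) (i : A) :
    |Qop φ η i| ≤ ((Fintype.card A : ℝ) ^ 2 + Fintype.card A) * ε := by
  have hφ1 : ∀ j ℓ, φ j i ℓ ≤ 1 := fun j ℓ =>
    (single_le_sum (fun b _ => hφ0 j b ℓ) (mem_univ i)).trans_eq (hφ j ℓ)
  have hterm : ∀ j ℓ, |η j ℓ * φ j i ℓ| ≤ ε := fun j ℓ => by
    rw [abs_mul, abs_of_nonneg (hφ0 j i ℓ)]
    exact (mul_le_of_le_one_right (abs_nonneg _) (hφ1 j ℓ)).trans (hη j ℓ)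
  calc |Qop φ η i|
      ≤ ∑ ℓ, ∑ j, |η j ℓ * φ j i ℓ| + ∑ ℓ, |η i ℓ| :=
        (abs_sub _ _).trans (add_le_add
          ((abs_sum_le_sum_abs _ _).trans (sum_le_sum fun ℓ _ => abs_sum_le_sum_abs _ _))
          (abs_sum_le_sum_abs _ _))
    _ ≤ ∑ ℓ : A, ∑ j : A, ε + ∑ ℓ : A, ε :=
        add_le_add (sum_le_sum fun ℓ _ => sum_le_sum fun j _ => hterm j ℓ)
          (sum_le_sum fun ℓ _ => hη i ℓ)
    _ = ((Fintype.card A : ℝ) ^ 2 + Fintype.card A) * ε := by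
        simp only [sum_const, card_univ, nsmul_eq_mul]
        ring

lemma limitDrift_eq {θ : A → ℝ} (hθ : ∑ i, θ i = 1) (i : A) :
    limitDrift ρ P φ θ i =
      (1 - ρ) * (∑ j, P j i * θ j - θ i) + ρ * Qop φ (fun j ℓ => θ j * θ ℓ) i := by
  have hdiag : ∑ ℓ, θ i * θ ℓ = θ i := by rw [← mul_sum, hθ, mul_one]
  have hquad : ∑ ℓ, θ ℓ * ∑ j, φ j i ℓ * θ j = ∑ ℓ, ∑ j, θ j * θ ℓ * φ j i ℓ :=
    sum_congr rfl fun ℓ _ => by rw [mul_sum]; exact sum_congr rfl fun j _ => by ring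
  rw [limitDrift, Qop, hdiag, hquad]
  ring

end Drift

section MeanDrift
variable {V A : Type*} [Fintype V] [DecidableEq V] [Fintype A] [DecidableEq A]
  (E : Finset (V × V)) (ρ : ℝ) (P : A → A → ℝ) (φ : A → A → A → ℝ)

lemma sum_pinRate_mul_indicator_sub (hP : ∀ a, ∑ b, P a b = 1) (hφ : ∀ a ℓ, ∑ b, φ a b ℓ = 1)
    (x : V → A) (u : V) (i : A) :
    ∑ b, pinRate E ρ P φ x u b * ((if b = i then 1 else 0) - if x u = i then 1 else 0) =
      (1 - ρ) * (1 / (Fintype.card V : ℝ)) * (P (x u) i - if x u = i then 1 else 0)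
        + ρ / #E *
          ∑ e ∈ E.filter fun e => e.1 = u, (φ (x u) i (x e.2) - if x u = i then 1 else 0) := by
  generalize (if x u = i then (1 : ℝ) else 0) = δ
  simp_rw [mul_sub, mul_boole]
  rw [sum_sub_distrib, sum_ite_eq', if_pos (mem_univ _), ← sum_mul, sum_pinRate E ρ P φ hP hφ]
  simp only [pinRate, sum_sub_distrib, sum_const, nsmul_eq_mul]
  ring

lemma meanDrift_eq (hn : 0 < Fintype.card V) (hE : E.Nonempty) (hP : ∀ a, ∑ b, P a b = 1)
    (hφ : ∀ a ℓ, ∑ b, φ a b ℓ = 1) (x : V → A) (i : A) :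
    meanDrift E ρ P φ x i =
      (1 - ρ) * (∑ j, P j i * confType x j - confType x i) + ρ * Qop φ (boundary E x) i := by
  have hn' : (Fintype.card V : ℝ) ≠ 0 := by positivity
  have hm : (#E : ℝ) ≠ 0 := by exact_mod_cast hE.card_pos.ne'
  have hedges : ∀ u, ∑ e ∈ E.filter fun e => e.1 = u,
      (φ (x u) i (x e.2) - if x u = i then 1 else 0) =
      ∑ e ∈ E.filter fun e => e.1 = u, (φ (x e.1) i (x e.2) - if x e.1 = i then 1 else 0) :=
    fun u => sum_congr rfl fun e he => by rw [(mem_filter.mp he).2]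
  rw [meanDrift, sum_pinTrans_mul_eq_sum_pinRate E ρ P φ x (fun y => confType y i - confType x i)
    (sub_self _)]
  simp_rw [confType_update_sub, mul_div_assoc', ← sum_div]
  rw [mul_div_assoc', mul_div_cancel_left₀ _ hn']
  simp_rw [sum_pinRate_mul_indicator_sub E ρ P φ hP hφ, hedges, sum_add_distrib, ← mul_sum]
  rw [sum_fiberwise E Prod.fst,
    sum_comp_eq_card_mul_sum_confType hn x fun j => P j i - if j = i then 1 else 0,
    sum_edges_eq_card_mul_sum_boundary E hE x fun j ℓ => φ j i ℓ - if j = i then 1 else 0]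
  simp_rw [mul_sub, sum_sub_distrib, mul_boole, sum_ite_eq', mem_univ, if_true, Qop,
    mul_comm (confType x _) (P _ i)]
  field_simp

end MeanDrift

section Lyapunov
variable {V A : Type*} [Fintype V] [DecidableEq V] [Fintype A] [DecidableEq A]
  (E : Finset (V × V)) (ρ : ℝ) (P : A → A → ℝ) (φ : A → A → A → ℝ)

lemma abs_meanDrift_sub_limitDrift_le (hρ0 : 0 ≤ ρ) (hρ1 : ρ ≤ 1) (hP : ∀ a, ∑ b, P a b = 1)
    (hφ0 : ∀ a b ℓ, 0 ≤ φ a b ℓ) (hφ : ∀ a ℓ, ∑ b, φ a b ℓ = 1) (hE : E.Nonempty)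
    (hloop : ∀ e ∈ E, e.1 ≠ e.2) (hn : 2 ≤ Fintype.card V) (x : V → A) (i : A) :
    |meanDrift E ρ P φ x i - limitDrift ρ P φ (confType x) i|
      ≤ ((Fintype.card A : ℝ) ^ 2 + Fintype.card A) *
        (4 * mixingGap E + 1 / ((Fintype.card V : ℝ) - 1)) := by
  have hn0 : 0 < Fintype.card V := by omega
  rw [meanDrift_eq E ρ P φ hn0 hE hP hφ, limitDrift_eq ρ P φ (sum_confType hn0 x),
    add_sub_add_left_eq_sub, ← mul_sub, Qop_sub, abs_mul, abs_of_nonneg hρ0]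
  exact (mul_le_of_le_one_left (abs_nonneg _) hρ1).trans
    (abs_Qop_le φ hφ0 hφ (fun j ℓ => abs_boundary_sub_confType_mul_le E hloop hn x j ℓ) i)

lemma sum_pinTrans_smul_confType_sub (hn : 0 < Fintype.card V) (x : V → A) :
    ∑ y, pinTrans E ρ P φ x y • (confType y - confType x) =
      (1 / (Fintype.card V : ℝ)) • meanDrift E ρ P φ x := by
  ext i
  simp only [Finset.sum_apply, Pi.smul_apply, Pi.sub_apply, smul_eq_mul, meanDrift]
  field_simp

lemma sum_pinTrans_mul_sub_le (hρ0 : 0 ≤ ρ) (hρ1 : ρ ≤ 1) (hP0 : ∀ a b, 0 ≤ P a b)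
    (hP : ∀ a, ∑ b, P a b = 1) (hφ0 : ∀ a b ℓ, 0 ≤ φ a b ℓ) (hφ : ∀ a ℓ, ∑ b, φ a b ℓ = 1)
    (hE : E.Nonempty) (hn : 0 < Fintype.card V) {f : (A → ℝ) → ℝ} {M : ℝ} (hM : 0 ≤ M)
    (hf : ∀ a ∈ stdSimplex ℝ A, ∀ b ∈ stdSimplex ℝ A,
      ‖f b - f a - fderiv ℝ f a (b - a)‖ ≤ M * ‖b - a‖ ^ 2) (x : V → A) :
    ∑ y, pinTrans E ρ P φ x y * (f (confType y) - f (confType x)) ≤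
      1 / (Fintype.card V : ℝ) * fderiv ℝ f (confType x) (meanDrift E ρ P φ x)
        + M / (Fintype.card V : ℝ) ^ 2 := by
  set g := fderiv ℝ f (confType x)
  set r : (V → A) → ℝ := fun y => f (confType y) - f (confType x) - g (confType y - confType x)
  have hlinear : ∑ y, pinTrans E ρ P φ x y * g (confType y - confType x) =
      1 / (Fintype.card V : ℝ) * g (meanDrift E ρ P φ x) := by
    simp_rw [← smul_eq_mul, ← map_smul, ← map_sum, sum_pinTrans_smul_confType_sub E ρ P φ hn]
  have hremainder : |∑ y, pinTrans E ρ P φ x y * r y| ≤ M / (Fintype.card V : ℝ) ^ 2 := by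
    refine abs_sum_pinTrans_mul_le E ρ P φ hρ0 hρ1 hP0 hP hφ0 hφ hn hE x r (by simp [r])
      fun u b => ?_
    calc |r (Function.update x u b)|
        ≤ M * ‖confType (Function.update x u b) - confType x‖ ^ 2 :=
          hf _ (confType_mem_stdSimplex hn x) _ (confType_mem_stdSimplex hn _)
      _ ≤ M * (1 / (Fintype.card V : ℝ)) ^ 2 := by
          gcongr
          exact norm_confType_update_sub_le hn x u b
      _ = M / (Fintype.card V : ℝ) ^ 2 := by ring
  have hsplit : ∀ y, pinTrans E ρ P φ x y * (f (confType y) - f (confType x)) =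
      pinTrans E ρ P φ x y * g (confType y - confType x) + pinTrans E ρ P φ x y * r y :=
    fun y => by simp only [r]; ring
  rw [sum_congr rfl fun y _ => hsplit y, sum_add_distrib, hlinear]
  linarith [(abs_le.mp hremainder).2]

lemma fderiv_meanDrift_le (hpin : IsPinModel E ρ P φ) (hn : 2 ≤ Fintype.card V)
    {f h : (A → ℝ) → ℝ} {L z : ℝ} (hL : ∀ θ ∈ stdSimplex ℝ A, ‖fderiv ℝ f θ‖ ≤ L)
    (hLyap : ∀ θ, inSimplex θ → fderiv ℝ f θ (limitDrift ρ P φ θ) ≤ -h θ + z) (x : V → A) :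
    fderiv ℝ f (confType x) (meanDrift E ρ P φ x) ≤ -h (confType x) + z +
      L * (((Fintype.card A : ℝ) ^ 2 + Fintype.card A) *
        (4 * mixingGap E + 1 / ((Fintype.card V : ℝ) - 1))) := by
  obtain ⟨hρ0, hρ1, -, hP, hφ0, hφ, hE, hloop⟩ := hpin
  set g := fderiv ℝ f (confType x)
  have hθ := confType_mem_stdSimplex (by omega) x
  have hε : 0 ≤ 4 * mixingGap E + 1 / ((Fintype.card V : ℝ) - 1) := by
    have : (2 : ℝ) ≤ Fintype.card V := by exact_mod_cast hn
    have := mixingGap_nonneg E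
    have : 0 ≤ 1 / ((Fintype.card V : ℝ) - 1) := one_div_nonneg.mpr (by linarith)
    positivity
  have hD : ‖meanDrift E ρ P φ x - limitDrift ρ P φ (confType x)‖ ≤
      ((Fintype.card A : ℝ) ^ 2 + Fintype.card A) *
        (4 * mixingGap E + 1 / ((Fintype.card V : ℝ) - 1)) :=
    (pi_norm_le_iff_of_nonneg (by positivity)).mpr fun i =>
      abs_meanDrift_sub_limitDrift_le E ρ P φ hρ0 hρ1 hP hφ0 hφ hE hloop hn x i
  have herr := (le_abs_self _).trans <| (g.le_opNorm _).trans <|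
    mul_le_mul (hL _ hθ) hD (norm_nonneg _) ((norm_nonneg _).trans (hL _ hθ))
  rw [map_sub] at herr
  linarith [hLyap _ hθ]

lemma sum_mul_comp_confType_le (hpin : IsPinModel E ρ P φ) (hn : 2 ≤ Fintype.card V)
    {μ : (V → A) → ℝ} (hμ : IsStationaryPin E ρ P φ μ) {f h : (A → ℝ) → ℝ} {L M z : ℝ}
    (hL : ∀ θ ∈ stdSimplex ℝ A, ‖fderiv ℝ f θ‖ ≤ L) (hM : 0 ≤ M)
    (hf : ∀ a ∈ stdSimplex ℝ A, ∀ b ∈ stdSimplex ℝ A,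
      ‖f b - f a - fderiv ℝ f a (b - a)‖ ≤ M * ‖b - a‖ ^ 2)
    (hLyap : ∀ θ, inSimplex θ → fderiv ℝ f θ (limitDrift ρ P φ θ) ≤ -h θ + z) :
    ∑ x, μ x * h (confType x) ≤
      z + L * (((Fintype.card A : ℝ) ^ 2 + Fintype.card A) *
        (4 * mixingGap E + 1 / ((Fintype.card V : ℝ) - 1))) + M / Fintype.card V := by
  have hdrift := fderiv_meanDrift_le E ρ P φ hpin hn hL hLyap
  obtain ⟨hρ0, hρ1, hP0, hP, hφ0, hφ, hE, -⟩ := hpin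
  obtain ⟨hμ0, hμ1, hμ⟩ := hμ
  have hn1 : (1 : ℝ) < Fintype.card V := by exact_mod_cast hn
  set n : ℝ := (Fintype.card V : ℝ)
  set ε := ((Fintype.card A : ℝ) ^ 2 + Fintype.card A) * (4 * mixingGap E + 1 / (n - 1))
  have hstep : ∀ x, ∑ y, pinTrans E ρ P φ x y * (f (confType y) - f (confType x)) ≤
      1 / n * (-h (confType x) + z + L * ε) + M / n ^ 2 := fun x =>
    (sum_pinTrans_mul_sub_le E ρ P φ hρ0 hρ1 hP0 hP hφ0 hφ hE (by omega) hM hf x).trans <|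
      add_le_add_left (mul_le_mul_of_nonneg_left (hdrift x) (by positivity)) _
  have hbalance : 0 ≤ 1 / n * (z + L * ε - ∑ x, μ x * h (confType x)) + M / n ^ 2 := by
    calc (0 : ℝ)
        = ∑ x, μ x * ∑ y, pinTrans E ρ P φ x y * (f (confType y) - f (confType x)) :=
          (sum_mul_sum_mul_sub_eq_zero_of_stationary (sum_pinTrans E ρ P φ) hμ _).symm
      _ ≤ ∑ x, μ x * (1 / n * (-h (confType x) + z + L * ε) + M / n ^ 2) :=
          sum_le_sum fun x _ => mul_le_mul_of_nonneg_left (hstep x) (hμ0 x)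
      _ = 1 / n * (z + L * ε - ∑ x, μ x * h (confType x)) + M / n ^ 2 := by
          rw [sum_congr rfl fun x _ => show
              μ x * (1 / n * (-h (confType x) + z + L * ε) + M / n ^ 2) =
                (1 / n * (z + L * ε) + M / n ^ 2) * μ x - 1 / n * (μ x * h (confType x)) by ring,
            sum_sub_distrib, ← mul_sum, ← mul_sum, hμ1]
          ring
  have hscaled : n * (1 / n * (z + L * ε - ∑ x, μ x * h (confType x)) + M / n ^ 2) =
      z + L * ε - ∑ x, μ x * h (confType x) + M / n := by
    field_simp
  have := mul_nonneg (by linarith : (0 : ℝ) ≤ n) hbalance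
  rw [hscaled] at this
  linarith

end Lyapunov

lemma liminf_massOf_mem_Icc {A : Type*} [Fintype A] [DecidableEq A] {ρ : ℝ} {P : A → A → ℝ}
    {φ : A → A → A → ℝ} {E : (n : ℕ) → Finset (Fin n × Fin n)}
    (hmodel : ∀ n, 2 ≤ n → IsPinModel (E n) ρ P φ)
    (hATM : Tendsto (fun n => mixingGap (E n)) atTop (nhds 0))
    {W : (A → ℝ) → ℝ} (hW : ContDiff ℝ 2 W) {h : (A → ℝ) → ℝ}
    (hh : ∀ θ : A → ℝ, inSimplex θ → 0 ≤ h θ) {z : ℝ}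
    (hLyap : ∀ θ : A → ℝ, inSimplex θ → fderiv ℝ W θ (limitDrift ρ P φ θ) ≤ -h θ + z)
    {μ : (n : ℕ) → (Fin n → A) → ℝ} (hμ : ∀ n, 2 ≤ n → IsStationaryPin (E n) ρ P φ (μ n))
    {δ : ℝ} (hδ : 0 < δ) :
    liminf (fun n => massOf (μ n) fun x : Fin n → A => h (confType x) < δ) atTop ∈
      Set.Icc (1 - z / δ) 1 := by
  obtain ⟨L, hL⟩ := (isCompact_stdSimplex ℝ A).exists_bound_of_continuousOn
    (hW.continuous_fderiv (by norm_num)).continuousOn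
  obtain ⟨M, hM, hTaylor⟩ :=
    hW.exists_norm_sub_sub_fderiv_le (isCompact_stdSimplex ℝ A) (convex_stdSimplex ℝ A)
  set K : ℝ := (Fintype.card A : ℝ) ^ 2 + Fintype.card A
  set C : ℕ → ℝ := fun n => z + L * (K * (4 * mixingGap (E n) + 1 / ((n : ℝ) - 1))) + M / n
  have hC : Tendsto C atTop (nhds z) := by
    have hinv : Tendsto (fun n : ℕ => 1 / ((n : ℝ) - 1)) atTop (nhds 0) := by
      simp_rw [one_div, sub_eq_add_neg]
      exact (tendsto_atTop_add_const_right _ _ tendsto_natCast_atTop_atTop).inv_tendsto_atTop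
    have := ((tendsto_const_nhds (x := z)).add
      ((((hATM.const_mul 4).add hinv).const_mul K).const_mul L)).add
      (tendsto_const_div_atTop_nhds_zero_nat M)
    simpa [C] using this
  have hmass : ∀ᶠ n in atTop,
      1 - C n / δ ≤ massOf (μ n) fun x : Fin n → A => h (confType x) < δ := by
    filter_upwards [eventually_ge_atTop 2] with n hn
    have hcard : 2 ≤ Fintype.card (Fin n) := by rwa [Fintype.card_fin]
    have hmean := sum_mul_comp_confType_le (E n) ρ P φ (hmodel n hn) hcard (hμ n hn) hL hM
      hTaylor hLyap
    rw [Fintype.card_fin] at hmean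
    refine le_trans ?_ (one_sub_div_le_massOf (hμ n hn).1 (hμ n hn).2.1
      (fun x => hh _ (confType_mem_stdSimplex (by omega) x)) hδ)
    gcongr
  have hle_one : ∀ᶠ n in atTop, massOf (μ n) (fun x : Fin n → A => h (confType x) < δ) ≤ 1 := by
    filter_upwards [eventually_ge_atTop 2] with n hn
    exact massOf_le_one (hμ n hn).1 (hμ n hn).2.1 _
  have hlim : Tendsto (fun n => 1 - C n / δ) atTop (nhds (1 - z / δ)) :=
    (hC.div_const δ).const_sub 1
  exact ⟨hlim.liminf_eq.symm.trans_le (liminf_le_liminf hmass hlim.isBoundedUnder_ge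
      (isBoundedUnder_of_eventually_le hle_one).isCoboundedUnder_ge),
    liminf_le_of_frequently_le hle_one.frequently (hlim.isBoundedUnder_ge.mono_ge hmass)⟩

theorem concentration_ATM_approx_general {A : Type*} [Fintype A] [DecidableEq A]
    (ρ : ℝ) (P : ℝ → A → A → ℝ) (φ : ℝ → A → A → A → ℝ)
    (E : (n : ℕ) → Finset (Fin n × Fin n))
    (hmodel : ∀ α > (0 : ℝ), ∀ n, 2 ≤ n → IsPinModel (E n) ρ (P α) (φ α))
    (hATM : Tendsto (fun n => mixingGap (E n)) atTop (nhds 0))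
    (W : ℝ → (A → ℝ) → ℝ) (hW : ∀ α > (0 : ℝ), ContDiff ℝ 2 (W α))
    (h : (A → ℝ) → ℝ)
    (hhnn : ∀ θ : A → ℝ, inSimplex θ → 0 ≤ h θ)
    (ζ : ℝ → ℝ)
    (hζ0 : Tendsto ζ (nhdsWithin 0 (Set.Ioi 0)) (nhds 0))
    (hLyap : ∀ α > (0 : ℝ), ∀ θ : A → ℝ, inSimplex θ →
      fderiv ℝ (W α) θ (limitDrift ρ (P α) (φ α) θ) ≤ -h θ + ζ α)
    (μ : ℝ → (n : ℕ) → (Fin n → A) → ℝ)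
    (hμ : ∀ α > (0 : ℝ), ∀ n, 2 ≤ n → IsStationaryPin (E n) ρ (P α) (φ α) (μ α n)) :
    ∀ δ > (0 : ℝ),
      Tendsto (fun α =>
          Filter.liminf (fun n => massOf (μ α n) (fun x : Fin n → A =>
            h (confType x) < δ)) atTop)
        (nhdsWithin 0 (Set.Ioi 0)) (nhds 1) := by
  intro δ hδ
  have hbounds : ∀ α > (0 : ℝ), liminf (fun n => massOf (μ α n) fun x : Fin n → A =>
      h (confType x) < δ) atTop ∈ Set.Icc (1 - ζ α / δ) 1 := fun α hα =>
    liminf_massOf_mem_Icc (hmodel α hα) hATM (hW α hα) hhnn (hLyap α hα) (hμ α hα) hδ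
  refine tendsto_of_tendsto_of_tendsto_of_le_of_le' (g := fun α => 1 - ζ α / δ)
    (h := fun _ => 1) ?_ tendsto_const_nhds ?_ ?_
  · simpa using (hζ0.div_const δ).const_sub 1
  · filter_upwards [self_mem_nhdsWithin] with α hα using (hbounds α hα).1
  · filter_upwards [self_mem_nhdsWithin] with α hα using (hbounds α hα).2

/-- Theorem: concentration via approximate mean-field Lyapunov functions.
For a family of PIN models `(𝒜, ρ, P_α, φ_α)` on an ATM graph sequence admitting an
approximate mean-field Lyapunov function `(V_α)` with `∇V_α·D̄_α ≤ −h + ζ(α)` on the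
simplex, `lim_{α→0} liminf_{n→∞} μ_n^{(α)}({x : h(θ(x)) < δ}) = 1` for every `δ > 0`. -/
theorem concentration_ATM_approx {A : Type*} [Fintype A] [DecidableEq A] [Nonempty A]
    (ρ : ℝ) (P : ℝ → A → A → ℝ) (φ : ℝ → A → A → A → ℝ)
    (E : (n : ℕ) → Finset (Fin n × Fin n))
    (hmodel : ∀ α > (0 : ℝ), ∀ n, 2 ≤ n → IsPinModel (E n) ρ (P α) (φ α))
    (hATM : Tendsto (fun n => mixingGap (E n)) atTop (nhds 0))
    (W : ℝ → (A → ℝ) → ℝ) (hW : ∀ α > (0 : ℝ), ContDiff ℝ 2 (W α))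
    (h : (A → ℝ) → ℝ) (hh : ContinuousOn h {θ : A → ℝ | inSimplex θ})
    (hhnn : ∀ θ : A → ℝ, inSimplex θ → 0 ≤ h θ)
    (ζ : ℝ → ℝ) (hζnn : ∀ α ≥ (0 : ℝ), 0 ≤ ζ α)
    (hζ0 : Tendsto ζ (nhdsWithin 0 (Set.Ioi 0)) (nhds 0))
    (hLyap : ∀ α > (0 : ℝ), ∀ θ : A → ℝ, inSimplex θ →
      fderiv ℝ (W α) θ (limitDrift ρ (P α) (φ α) θ) ≤ -h θ + ζ α)
    (μ : ℝ → (n : ℕ) → (Fin n → A) → ℝ)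
    (hμ : ∀ α > (0 : ℝ), ∀ n, 2 ≤ n → IsStationaryPin (E n) ρ (P α) (φ α) (μ α n)) :
    ∀ δ > (0 : ℝ),
      Tendsto (fun α =>
          Filter.liminf (fun n => massOf (μ α n) (fun x : Fin n → A =>
            h (confType x) < δ)) atTop)
        (nhdsWithin 0 (Set.Ioi 0)) (nhds 1) :=
  concentration_ATM_approx_general ρ P φ E hmodel hATM W hW h hhnn ζ hζ0 hLyap μ hμ
end
end

section
/- For a nonempty finite directed graph G without self-loops on n ≥ 2 nodes, W_G = 0 if and only if G is the complete graph, i.e., E = {(s,u) : s ≠ u ∈ V} (equivalently m = n(n−1)). -/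
open Finset

noncomputable section

/-! The gap is the supremum of finitely many absolute values, so it vanishes exactly when every
discrepancy `|E_{SU}|/m - |S||U|/(n(n-1))` does. For the complete graph `E_{SU} = S × U` and
`m = n(n-1)`, so all discrepancies vanish. Conversely, for `s ≠ u` we have `n ≥ 2`, so a
vanishing discrepancy at `S = {s}`, `U = {u}` forces `E_{SU} ≠ ∅`, i.e. `(s, u) ∈ E`; and `E`
has no loops. -/

namespace MixingGap

variable {V : Type*} [Fintype V] [DecidableEq V]

def discrepancy (E : Finset (V × V)) (S U : Finset V) : ℝ :=
  ((E.filter fun e => e.1 ∈ S ∧ e.2 ∈ U).card : ℝ) / (E.card : ℝ) -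
    ((S.card : ℝ) * (U.card : ℝ)) / ((Fintype.card V : ℝ) * ((Fintype.card V : ℝ) - 1))

theorem bddAbove_abs_discrepancy (E : Finset (V × V)) :
    BddAbove {w : ℝ | ∃ S U : Finset V, Disjoint S U ∧ w = |discrepancy E S U|} :=
  ((Set.finite_range fun p : Finset V × Finset V => |discrepancy E p.1 p.2|).subset
    (by rintro _ ⟨S, U, -, rfl⟩; exact ⟨(S, U), rfl⟩)).bddAbove

theorem mixingGap_eq_zero_iff_forall_discrepancy_eq_zero (E : Finset (V × V)) :
    mixingGap E = 0 ↔ ∀ S U : Finset V, Disjoint S U → discrepancy E S U = 0 := by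
  change sSup {w : ℝ | ∃ S U : Finset V, Disjoint S U ∧ w = |discrepancy E S U|} = 0 ↔ _
  constructor
  · intro h S U hSU
    have hle := le_csSup (bddAbove_abs_discrepancy E) ⟨S, U, hSU, rfl⟩
    rw [h] at hle
    exact abs_nonpos_iff.1 hle
  · intro h
    have hset : {w : ℝ | ∃ S U : Finset V, Disjoint S U ∧ w = |discrepancy E S U|} = {0} := by
      ext w
      constructor
      · rintro ⟨S, U, hSU, rfl⟩
        simp [h S U hSU]
      · rintro rfl
        exact ⟨∅, ∅, disjoint_empty_left _, by simp [discrepancy]⟩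
    rw [hset, csSup_singleton]

theorem filter_ne_eq_offDiag :
    (univ.filter fun e : V × V => e.1 ≠ e.2) = (univ : Finset V).offDiag := by
  ext e
  simp

omit [DecidableEq V] in
theorem card_offDiag_univ :
    ((univ : Finset V).offDiag.card : ℝ) = Fintype.card V * (Fintype.card V - 1) := by
  rw [offDiag_card, card_univ, Nat.cast_sub (Nat.le_mul_self _)]
  push_cast
  ring

theorem filter_offDiag_eq_product {S U : Finset V} (hSU : Disjoint S U) :
    ((univ : Finset V).offDiag.filter fun e => e.1 ∈ S ∧ e.2 ∈ U) = S ×ˢ U := by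
  ext ⟨a, b⟩
  have hne : a ∈ S → b ∈ U → a ≠ b := fun ha hb hab => disjoint_left.1 hSU ha (hab ▸ hb)
  simp only [mem_filter, mem_offDiag, mem_univ, true_and, mem_product]
  tauto

theorem discrepancy_offDiag {S U : Finset V} (hSU : Disjoint S U) :
    discrepancy (univ : Finset V).offDiag S U = 0 := by
  rw [discrepancy, filter_offDiag_eq_product hSU, card_product, card_offDiag_univ]
  push_cast
  exact sub_self _

theorem mem_of_discrepancy_singleton_eq_zero {E : Finset (V × V)} {s u : V} (hsu : s ≠ u)
    (h : discrepancy E {s} {u} = 0) : (s, u) ∈ E := by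
  have : Nontrivial V := nontrivial_of_ne s u hsu
  have hn : (1 : ℝ) < Fintype.card V := by exact_mod_cast Fintype.one_lt_card
  by_contra hsuE
  have hempty : (E.filter fun e => e.1 ∈ ({s} : Finset V) ∧ e.2 ∈ ({u} : Finset V)) = ∅ := by
    refine filter_eq_empty_iff.2 ?_
    rintro ⟨a, b⟩ hab ⟨ha, hb⟩
    rw [mem_singleton] at ha hb
    subst ha hb
    exact hsuE hab
  rw [discrepancy, hempty] at h
  simp only [card_empty, Nat.cast_zero, zero_div, card_singleton, Nat.cast_one, one_mul,
    zero_sub, neg_eq_zero, one_div, inv_eq_zero, mul_eq_zero] at h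
  rcases h with h | h <;> linarith

end MixingGap

open MixingGap in
theorem mixingGap_eq_zero_iff_complete_general {V : Type*} [Fintype V] [DecidableEq V]
    (E : Finset (V × V))
    (hloop : ∀ e ∈ E, e.1 ≠ e.2) :
    mixingGap E = 0 ↔ E = Finset.univ.filter (fun e : V × V => e.1 ≠ e.2) := by
  rw [mixingGap_eq_zero_iff_forall_discrepancy_eq_zero, filter_ne_eq_offDiag]
  constructor
  · intro h
    ext ⟨s, u⟩
    refine ⟨fun hsu => mem_offDiag.2 ⟨mem_univ _, mem_univ _, hloop _ hsu⟩, fun hsu => ?_⟩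
    have hne : s ≠ u := (mem_offDiag.1 hsu).2.2
    exact mem_of_discrepancy_singleton_eq_zero hne (h _ _ (disjoint_singleton.2 hne))
  · rintro rfl S U hSU
    exact discrepancy_offDiag hSU

/-- a nonempty finite directed graph without self-loops on `n ≥ 2` nodes
has zero total mixing gap if and only if it is the complete graph. -/
theorem mixingGap_eq_zero_iff_complete {V : Type*} [Fintype V] [DecidableEq V]
    (E : Finset (V × V)) (hn : 2 ≤ Fintype.card V)
    (hE : E.Nonempty) (hloop : ∀ e ∈ E, e.1 ≠ e.2) :
    mixingGap E = 0 ↔ E = Finset.univ.filter (fun e : V × V => e.1 ≠ e.2) :=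
  mixingGap_eq_zero_iff_complete_general E hloop
end
end

section
/- Let b > c > 0, d > 0, α > 0, and set z₁* = d(b−c)/(b(d+c)) and z₂* = c(b−c)/(b(d+c)). Define, for real θ₁, θ₂ with θ₁ ≥ 0, θ₂ ≥ 0 and θ₁ + θ₂ ≤ 1: D̄₁(θ₁,θ₂) = b(1−θ₁−θ₂)θ₁ − cθ₁ + α(1−θ₁−θ₂), D̄₂(θ₁,θ₂) = cθ₁ − dθ₂, and V(θ₁,θ₂) = θ₁ − (z₁* + α/b)·ln(θ₁ + α/b) + (b/(2c))(θ₂ − z₂*)². Then for all such (θ₁,θ₂): (∂V/∂θ₁)·D̄₁ + (∂V/∂θ₂)·D̄₂ ≤ −b(θ₁ − z₁*)² − (bd/c)(θ₂ − z₂*)² + αc/b, where ∂V/∂θ₁ = (θ₁ − z₁*)/(θ₁ + α/b) and ∂V/∂θ₂ = (b/c)(θ₂ − z₂*). -/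
/-- approximate mean-field Lyapunov inequality for the SIRS model.
With `z₁* = d(b−c)/(b(d+c))`, `z₂* = c(b−c)/(b(d+c))`, and the given expressions for the
partial derivatives of `V` and for the drift `D̄`, on the simplex region
`θ₁, θ₂ ≥ 0`, `θ₁ + θ₂ ≤ 1` we have
`(∂V/∂θ₁)·D̄₁ + (∂V/∂θ₂)·D̄₂ ≤ −b(θ₁ − z₁*)² − (bd/c)(θ₂ − z₂*)² + αc/b`. -/
theorem sirs_approx_lyapunov (b c d α : ℝ) (hc : 0 < c) (hbc : c < b) (hd : 0 < d)
    (hα : 0 < α) (z₁ z₂ : ℝ)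
    (hz₁ : z₁ = d * (b - c) / (b * (d + c))) (hz₂ : z₂ = c * (b - c) / (b * (d + c))) :
    ∀ θ₁ θ₂ : ℝ, 0 ≤ θ₁ → 0 ≤ θ₂ → θ₁ + θ₂ ≤ 1 →
      ((θ₁ - z₁) / (θ₁ + α / b)) *
          (b * (1 - θ₁ - θ₂) * θ₁ - c * θ₁ + α * (1 - θ₁ - θ₂))
        + ((b / c) * (θ₂ - z₂)) * (c * θ₁ - d * θ₂) ≤
      -b * (θ₁ - z₁) ^ 2 - (b * d / c) * (θ₂ - z₂) ^ 2 + α * c / b := by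
  intro θ₁ θ₂ h1 h2 h12
  have hb : (0:ℝ) < b := hc.trans hbc
  have hdc : (0:ℝ) < d + c := by linarith
  have hu : (0:ℝ) < θ₁ + α / b := by positivity
  have key : ((θ₁ - z₁) / (θ₁ + α / b)) *
          (b * (1 - θ₁ - θ₂) * θ₁ - c * θ₁ + α * (1 - θ₁ - θ₂))
        + ((b / c) * (θ₂ - z₂)) * (c * θ₁ - d * θ₂) =
      -b * (θ₁ - z₁) ^ 2 - (b * d / c) * (θ₂ - z₂) ^ 2
        + (α * c / b) * ((θ₁ - z₁) / (θ₁ + α / b)) := by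
    subst hz₁ hz₂
    field_simp
    ring
  rw [key]
  have hratio : (θ₁ - z₁) / (θ₁ + α / b) ≤ 1 := by
    rw [div_le_one hu]
    have hz₁pos : 0 < z₁ := by
      have hbc' : 0 < b - c := by linarith
      rw [hz₁]; positivity
    have : 0 < α / b := by positivity
    linarith
  have hpos : 0 < α * c / b := by positivity
  nlinarith [mul_le_mul_of_nonneg_left hratio (le_of_lt hpos)]
end

section
/- Let n ≥ 2 and p ∈ (0,1], and let G(n,p) be the Erdős–Rényi random graph on n nodes. Then for every η with 0 < η ≤ 1, P(W_{G(n,p)} ≥ η) ≤ 3^{n+2}·exp(−n²pη³/32). -/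
open Finset MeasureTheory

noncomputable section

/-- The total mixing gap, with the convention that it equals `1` for graphs with no links. -/
def mixingGap' {V : Type*} [Fintype V] [DecidableEq V] (E : Finset (V × V)) : ℝ :=
  if E = ∅ then 1 else mixingGap E

/-- The Bernoulli measure on `Bool` with parameter `p`. -/
def berMeasure (p : ℝ) : Measure Bool :=
  (Real.toNNReal p) • Measure.dirac true + (Real.toNNReal (1 - p)) • Measure.dirac false

instance (p : ℝ) : IsFiniteMeasure (berMeasure p) := by
  unfold berMeasure; infer_instance

/-- The law of an i.i.d. family of Bernoulli(p) random variables indexed by ordered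
pairs of nodes. -/
def bernoulliPi (n : ℕ) (p : ℝ) : Measure ((Fin n × Fin n) → Bool) :=
  Measure.pi fun _ => berMeasure p

/-- The (directed) link set of the Erdős–Rényi random graph obtained from the Bernoulli
family `ω`: for each unordered pair `{i,j}` of distinct nodes, both directed links
`(i,j)` and `(j,i)` are present iff the Bernoulli variable of the pair equals `true`. -/
def erEdges (n : ℕ) (ω : (Fin n × Fin n) → Bool) : Finset (Fin n × Fin n) :=
  Finset.univ.filter fun e =>
    (e.1 < e.2 ∧ ω (e.1, e.2) = true) ∨ (e.2 < e.1 ∧ ω (e.2, e.1) = true)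

/-!
Every count `X_A(ω) = #{e ∈ A | ω e}` of present pairs in a fixed set `A` is binomial, so the
exponential-moment method together with `exp s ≤ 1 + s + 3s²/4` on `|s| ≤ 1` gives
`P(|X_A - |A|p| ≥ t) ≤ 2 exp(-B)` as soon as `B ≤ t/2` and `3|A|pB ≤ t²`.
The link count is `m = 2 X` for the `N = n(n-1)/2` pairs `i < j`, and for disjoint `S, U` the
crossing count `|E_SU|` is `X_A` for a set `A` of `|S||U|` such pairs. If all these counts
deviate from their means by less than `t = ηNp/2`, every term of the mixing gap is at most
`t / X < η`. A union bound over the `≤ 3^n` disjoint pairs `(S, U)` and the total count gives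
`2(3^n + 1) exp(-B) ≤ 3^(n+2) exp(-B)` for `B = n²pη³/32`; the conditions on `B` hold once
`B > n + 2`, and otherwise the right-hand side exceeds `1`.
-/

open ProbabilityTheory

lemma Real.exp_le_one_add_add_sq {x : ℝ} (hx : |x| ≤ 1) : Real.exp x ≤ 1 + x + 3 / 4 * x ^ 2 := by
  have h := (abs_sub_le_iff.1 (Real.exp_bound hx (n := 2) two_pos)).1
  norm_num [sum_range_succ, sq_abs] at h
  linarith

lemma one_le_three_pow_mul_exp_neg {k : ℕ} {x : ℝ} (hx : x ≤ k) : 1 ≤ 3 ^ k * Real.exp (-x) := by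
  have : Real.exp x ≤ 3 ^ k := calc
    Real.exp x ≤ Real.exp 1 ^ k := by rw [← Real.exp_nat_mul, mul_one]; exact Real.exp_le_exp.2 hx
    _ ≤ 3 ^ k := by gcongr; exact Real.exp_one_lt_d9.le.trans (by norm_num)
  calc (1 : ℝ) = Real.exp x * Real.exp (-x) := by rw [← Real.exp_add, add_neg_cancel, Real.exp_zero]
    _ ≤ 3 ^ k * Real.exp (-x) := by gcongr

lemma chernoff_conditions_of_add_two_lt {n : ℕ} {N p η t : ℝ} (hN : N = n * (n - 1) / 2)
    (ht : t = η * (N * p) / 2) (hp0 : 0 < p) (hp1 : p ≤ 1) (hη0 : 0 < η) (hη1 : η ≤ 1)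
    (hB : n + 2 < n ^ 2 * p * η ^ 3 / 32) :
    0 < t ∧ n ^ 2 * p * η ^ 3 / 32 ≤ t / 2 ∧ 3 * (N * p) * (n ^ 2 * p * η ^ 3 / 32) ≤ t ^ 2 := by
  have hpη : p * η ^ 3 ≤ 1 := mul_le_one₀ hp1 (by positivity) (pow_le_one₀ hη0.le hη1)
  have hn : (32 : ℝ) < n := by nlinarith [mul_le_mul_of_nonneg_left hpη (sq_nonneg (n : ℝ))]
  have hn1 : (0 : ℝ) < n - 1 := by linarith
  have hη2 : η ^ 2 ≤ 1 := pow_le_one₀ hη0.le hη1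
  subst hN ht
  refine ⟨by positivity, ?_, ?_⟩
  · nlinarith [mul_pos (mul_pos hη0 hp0) (by linarith : (0 : ℝ) < n)]
  · have : 0 ≤ n * (n - 1) / 2 * p ^ 2 * η ^ 2 * n * (4 * (n - 1) - 3 * n * η) / 32 := by
      have : (0 : ℝ) ≤ 4 * (n - 1) - 3 * n * η := by nlinarith
      positivity
    nlinarith

lemma exists_chernoff_exponent {m t B : ℝ} (ht : 0 < t) (hBt : B ≤ t / 2)
    (hBm : 3 * m * B ≤ t ^ 2) : ∃ s, 0 ≤ s ∧ s ≤ 1 ∧ -s * t + 3 / 4 * m * s ^ 2 ≤ -B := by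
  by_cases hm : 3 * m ≤ 2 * t
  · exact ⟨1, zero_le_one, le_rfl, by linarith⟩
  · have hm0 : 0 < m := by linarith
    -- the minimiser of the exponent over all of `ℝ`
    refine ⟨2 * t / (3 * m), by positivity, (div_le_one (by positivity)).2 (by linarith), ?_⟩
    have : -(2 * t / (3 * m)) * t + 3 / 4 * m * (2 * t / (3 * m)) ^ 2 = -(t ^ 2 / (3 * m)) := by
      field_simp; ring
    rw [this, neg_le_neg_iff, le_div_iff₀ (by positivity)]
    linarith

section Bernoulli

variable {p : ℝ}

lemma isProbabilityMeasure_berMeasure (hp0 : 0 ≤ p) (hp1 : p ≤ 1) :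
    IsProbabilityMeasure (berMeasure p) := by
  constructor
  simp only [berMeasure, Measure.coe_add, Measure.coe_smul, Pi.add_apply, Pi.smul_apply,
    measure_univ, ENNReal.smul_def, smul_eq_mul, mul_one]
  change ENNReal.ofReal p + ENNReal.ofReal (1 - p) = 1
  rw [← ENNReal.ofReal_add hp0 (sub_nonneg.2 hp1)]
  simp

lemma integral_berMeasure (hp0 : 0 ≤ p) (hp1 : p ≤ 1) (f : Bool → ℝ) :
    ∫ b, f b ∂berMeasure p = p * f true + (1 - p) * f false := by
  simp [berMeasure, integral_add_measure, integral_smul_nnreal_measure, NNReal.smul_def, hp0, hp1]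

variable {ι : Type*} [Fintype ι]

def trueCount (A : Finset ι) (ω : ι → Bool) : ℕ := #{i ∈ A | ω i}

lemma mgf_trueCount (hp0 : 0 ≤ p) (hp1 : p ≤ 1) (A : Finset ι) (t : ℝ) :
    mgf (fun ω ↦ (trueCount A ω : ℝ)) (Measure.pi fun _ : ι ↦ berMeasure p) t
      = (p * Real.exp t + (1 - p)) ^ #A := by
  have := isProbabilityMeasure_berMeasure hp0 hp1
  let X : Bool → ℝ := fun b ↦ if b then 1 else 0
  have hsum : (fun ω : ι → Bool ↦ (trueCount A ω : ℝ)) = ∑ i ∈ A, fun ω ↦ X (ω i) := by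
    ext ω
    simp [trueCount, X]
  rw [hsum, (iIndepFun_pi (X := fun _ ↦ X) fun _ ↦ measurable_of_finite _ |>.aemeasurable).mgf_sum
    (fun _ ↦ by fun_prop), ← prod_const]
  refine prod_congr rfl fun i _ ↦ ?_
  have hev := measurePreserving_eval (fun _ : ι ↦ berMeasure p) i
  rw [show (fun ω : ι → Bool ↦ X (ω i)) = X ∘ Function.eval i from rfl,
    ← mgf_map hev.measurable.aemeasurable (measurable_of_finite _).aestronglyMeasurable,
    hev.map_eq, mgf, integral_berMeasure hp0 hp1]
  simp [X]

lemma mgf_trueCount_le (hp0 : 0 ≤ p) (hp1 : p ≤ 1) (A : Finset ι) {u : ℝ} (hu : |u| ≤ 1) :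
    mgf (fun ω ↦ (trueCount A ω : ℝ)) (Measure.pi fun _ : ι ↦ berMeasure p) u
      ≤ Real.exp (#A * p * (u + 3 / 4 * u ^ 2)) := by
  rw [mgf_trueCount hp0 hp1, mul_assoc, Real.exp_nat_mul]
  gcongr
  nlinarith [Real.add_one_le_exp (p * (u + 3 / 4 * u ^ 2)),
    mul_le_mul_of_nonneg_left (Real.exp_le_one_add_add_sq hu) hp0]

lemma measureReal_trueCount_ge_le (hp0 : 0 ≤ p) (hp1 : p ≤ 1) (A : Finset ι) (t : ℝ) {s : ℝ}
    (hs0 : 0 ≤ s) (hs1 : s ≤ 1) :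
    (Measure.pi fun _ : ι ↦ berMeasure p).real {ω | #A * p + t ≤ trueCount A ω}
      ≤ Real.exp (-s * t + 3 / 4 * (#A * p) * s ^ 2) := by
  have := isProbabilityMeasure_berMeasure hp0 hp1
  calc _ ≤ Real.exp (-s * (#A * p + t)) * Real.exp (#A * p * (s + 3 / 4 * s ^ 2)) := by
        grw [measure_ge_le_exp_mul_mgf _ hs0 .of_finite,
          mgf_trueCount_le hp0 hp1 A (abs_le.2 ⟨by linarith, hs1⟩)]
    _ = _ := by rw [← Real.exp_add]; ring_nf

lemma measureReal_trueCount_le_le (hp0 : 0 ≤ p) (hp1 : p ≤ 1) (A : Finset ι) (t : ℝ) {s : ℝ}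
    (hs0 : 0 ≤ s) (hs1 : s ≤ 1) :
    (Measure.pi fun _ : ι ↦ berMeasure p).real {ω | trueCount A ω ≤ #A * p - t}
      ≤ Real.exp (-s * t + 3 / 4 * (#A * p) * s ^ 2) := by
  have := isProbabilityMeasure_berMeasure hp0 hp1
  calc _ ≤ Real.exp (s * (#A * p - t)) * Real.exp (#A * p * (-s + 3 / 4 * (-s) ^ 2)) := by
        grw [measure_le_le_exp_mul_mgf _ (neg_nonpos.2 hs0) .of_finite,
          mgf_trueCount_le hp0 hp1 A (abs_le.2 ⟨by linarith, by linarith⟩), neg_neg]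
    _ = _ := by rw [← Real.exp_add]; ring_nf

lemma measureReal_abs_trueCount_sub_ge_le (hp0 : 0 ≤ p) (hp1 : p ≤ 1) (A : Finset ι)
    {t B : ℝ} (ht : 0 < t) (hBt : B ≤ t / 2) (hBA : 3 * (#A * p) * B ≤ t ^ 2) :
    (Measure.pi fun _ : ι ↦ berMeasure p).real {ω | t ≤ |trueCount A ω - #A * p|}
      ≤ 2 * Real.exp (-B) := by
  obtain ⟨s, hs0, hs1, hsB⟩ := exists_chernoff_exponent ht hBt hBA
  have hsplit : {ω | t ≤ |(trueCount A ω : ℝ) - #A * p|}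
      = {ω | #A * p + t ≤ trueCount A ω} ∪ {ω | trueCount A ω ≤ #A * p - t} := by
    ext ω
    simp only [Set.mem_ofPred_eq, Set.mem_union, le_abs']
    grind
  rw [hsplit, two_mul]
  grw [measureReal_union_le, measureReal_trueCount_ge_le hp0 hp1 A t hs0 hs1,
    measureReal_trueCount_le_le hp0 hp1 A t hs0 hs1, hsB]

end Bernoulli

lemma card_filter_disjoint_le {α : Type*} [Fintype α] [DecidableEq α] :
    #{x : Finset α × Finset α | Disjoint x.1 x.2} ≤ 3 ^ Fintype.card α := by
  let code (x : Finset α × Finset α) (v : α) : Option Bool :=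
    if v ∈ x.1 then some true else if v ∈ x.2 then some false else none
  have hcode : Set.InjOn code {x | Disjoint x.1 x.2} := by
    intro x hx y hy hxy
    have hv := congrFun hxy
    simp only [Set.mem_ofPred_eq, disjoint_left] at hx hy
    ext v <;> specialize hv v <;> simp only [code] at hv <;> split_ifs at hv <;> grind
  calc _ ≤ #(univ : Finset (α → Option Bool)) :=
        card_le_card_of_injOn code (fun _ _ ↦ mem_univ _) (by simpa using hcode)
    _ = 3 ^ Fintype.card α := by simp

def sortPair {α : Type*} [LinearOrder α] (e : α × α) : α × α := (min e.1 e.2, max e.1 e.2)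

lemma mixingGap_le {V : Type*} [Fintype V] [DecidableEq V] {E : Finset (V × V)} {c : ℝ}
    (h : ∀ S U : Finset V, Disjoint S U →
      |(#{e ∈ E | e.1 ∈ S ∧ e.2 ∈ U} : ℝ) / #E -
        #S * #U / (Fintype.card V * (Fintype.card V - 1))| ≤ c) :
    mixingGap E ≤ c :=
  csSup_le ⟨_, ∅, ∅, disjoint_empty_left _, rfl⟩ fun _ ⟨S, U, hSU, hw⟩ ↦ hw ▸ h S U hSU

lemma abs_div_two_mul_sub_div_two_mul_le {X Y N a q t : ℝ} (hX : 0 < X) (hN : 0 < N)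
    (ha : 0 ≤ a) (haN : a ≤ N) (hY : |Y - a * q| ≤ t) (hXN : |X - N * q| ≤ t) :
    |Y / (2 * X) - a / (2 * N)| ≤ t / X := by
  have hsplit : Y / (2 * X) - a / (2 * N) = (N * (Y - a * q) - a * (X - N * q)) / (2 * X * N) := by
    field_simp; ring
  rw [hsplit, abs_div, abs_of_pos (show 0 < 2 * X * N by positivity),
    div_le_div_iff₀ (by positivity) hX]
  calc |N * (Y - a * q) - a * (X - N * q)| * X ≤ (N * t + a * t) * X := by
        gcongr
        grw [abs_sub, abs_mul, abs_mul, abs_of_pos hN, abs_of_nonneg ha, hY, hXN]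
    _ ≤ t * (2 * X * N) := by
        nlinarith [mul_le_mul_of_nonneg_right haN (mul_nonneg ((abs_nonneg _).trans hY) hX.le)]

section ErdosRenyi

variable {n : ℕ}

-- `ω` is only read at pairs `i < j`; `crossPairs S U` are those deciding the links from `S` to `U`.
def upperPairs (n : ℕ) : Finset (Fin n × Fin n) := {e | e.1 < e.2}

def crossPairs (S U : Finset (Fin n)) : Finset (Fin n × Fin n) := (S ×ˢ U).image sortPair

lemma card_upperPairs : (#(upperPairs n) : ℝ) = n * (n - 1) / 2 := by
  rw [upperPairs, Fintype.card_product_filter_lt, Nat.cast_choose_two, Fintype.card_fin]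

lemma mem_erEdges {ω : Fin n × Fin n → Bool} {e : Fin n × Fin n} :
    e ∈ erEdges n ω ↔ e.1 ≠ e.2 ∧ ω (sortPair e) := by
  obtain ⟨a, b⟩ := e
  rcases lt_trichotomy a b with h | rfl | h
  · simp [erEdges, sortPair, h, h.ne, h.le, lt_asymm h]
  · simp [erEdges]
  · simp [erEdges, sortPair, h, h.ne', h.le, lt_asymm h]

lemma sortPair_mem_upperPairs {e : Fin n × Fin n} (he : e.1 ≠ e.2) :
    sortPair e ∈ upperPairs n := by
  simpa [upperPairs, sortPair] using he.symm

lemma injOn_sortPair {S U : Finset (Fin n)} (hSU : Disjoint S U) :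
    Set.InjOn sortPair (↑(S ×ˢ U) : Set (Fin n × Fin n)) := by
  rintro ⟨a, b⟩ he ⟨c, d⟩ he' h
  obtain ⟨ha, hb⟩ := mem_product.1 he
  obtain ⟨hc, hd⟩ := mem_product.1 he'
  have hab : a ≠ b := fun h ↦ disjoint_left.1 hSU ha (h ▸ hb)
  have hcd : c ≠ d := fun h ↦ disjoint_left.1 hSU hc (h ▸ hd)
  have had : a ≠ d := fun h ↦ disjoint_left.1 hSU ha (h ▸ hd)
  have hcb : c ≠ b := fun h ↦ disjoint_left.1 hSU hc (h ▸ hb)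
  simp only [sortPair, Prod.mk.injEq, min_def, max_def] at h ⊢
  split_ifs at h <;> omega

lemma card_crossPairs {S U : Finset (Fin n)} (hSU : Disjoint S U) :
    #(crossPairs S U) = #S * #U := by
  rw [crossPairs, card_image_of_injOn (injOn_sortPair hSU), card_product]

lemma crossPairs_subset_upperPairs {S U : Finset (Fin n)} (hSU : Disjoint S U) :
    crossPairs S U ⊆ upperPairs n := by
  simp only [crossPairs, image_subset_iff, mem_product]
  exact fun e he ↦ sortPair_mem_upperPairs fun h ↦ disjoint_left.1 hSU he.1 (h ▸ he.2)

lemma card_filter_erEdges {S U : Finset (Fin n)} (hSU : Disjoint S U) (ω : Fin n × Fin n → Bool) :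
    #{e ∈ erEdges n ω | e.1 ∈ S ∧ e.2 ∈ U} = trueCount (crossPairs S U) ω := by
  have hfilter : {e ∈ erEdges n ω | e.1 ∈ S ∧ e.2 ∈ U} = {e ∈ S ×ˢ U | ω (sortPair e)} := by
    ext e
    simp only [mem_filter, mem_product, mem_erEdges]
    have := fun (h : e.1 ∈ S ∧ e.2 ∈ U) (he : e.1 = e.2) ↦ disjoint_left.1 hSU h.1 (he ▸ h.2)
    tauto
  rw [hfilter, trueCount, crossPairs, filter_image, card_image_of_injOn]
  exact (injOn_sortPair hSU).mono (coe_subset.2 (filter_subset _ _))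

lemma card_erEdges (ω : Fin n × Fin n → Bool) :
    #(erEdges n ω) = 2 * trueCount (upperPairs n) ω := by
  set T : Finset (Fin n × Fin n) := {e ∈ upperPairs n | ω e}
  have hsplit : erEdges n ω = T ∪ T.image Prod.swap := by
    ext ⟨a, b⟩
    simp [T, upperPairs, erEdges]
  have hdisj : Disjoint T (T.image Prod.swap) := by
    simp only [disjoint_left, mem_image]
    rintro _ he ⟨e', he', rfl⟩
    simp only [T, upperPairs, mem_filter, mem_univ, true_and] at he he'
    exact lt_asymm he.1 he'.1
  rw [hsplit, card_union_of_disjoint hdisj, card_image_of_injective _ Prod.swap_injective, two_mul]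
  rfl

def crossPairFamily (n : ℕ) : Finset (Finset (Fin n × Fin n)) :=
  insert (upperPairs n)
    (({x | Disjoint x.1 x.2} : Finset (Finset (Fin n) × Finset (Fin n))).image
      fun x ↦ crossPairs x.1 x.2)

lemma card_crossPairFamily_le : #(crossPairFamily n) ≤ 3 ^ n + 1 := by
  grw [crossPairFamily, card_insert_le, card_image_le, card_filter_disjoint_le, Fintype.card_fin]

lemma crossPairs_mem_crossPairFamily {S U : Finset (Fin n)} (hSU : Disjoint S U) :
    crossPairs S U ∈ crossPairFamily n :=
  mem_insert_of_mem (mem_image.2 ⟨(S, U), by simpa using hSU, rfl⟩)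

lemma subset_upperPairs_of_mem_crossPairFamily {A : Finset (Fin n × Fin n)}
    (hA : A ∈ crossPairFamily n) : A ⊆ upperPairs n := by
  simp only [crossPairFamily, mem_insert, mem_image, mem_filter, mem_univ, true_and] at hA
  obtain rfl | ⟨x, hx, rfl⟩ := hA
  exacts [subset_rfl, crossPairs_subset_upperPairs hx]

lemma mixingGap'_erEdges_lt (hn : 2 ≤ n) {p η : ℝ} (hp : 0 < p) (hη0 : 0 < η)
    (hη1 : η ≤ 1) {ω : Fin n × Fin n → Bool}
    (hω : ∀ A ∈ crossPairFamily n,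
      |(trueCount A ω : ℝ) - #A * p| < η * (#(upperPairs n) * p) / 2) :
    mixingGap' (erEdges n ω) < η := by
  have h2N : (n * (n - 1) : ℝ) = 2 * #(upperPairs n) := by rw [card_upperPairs]; ring
  have hE : (#(erEdges n ω) : ℝ) = 2 * trueCount (upperPairs n) ω := by simp [card_erEdges]
  have hXN := hω _ (mem_insert_self _ _)
  set N : ℝ := (#(upperPairs n) : ℝ)
  set X : ℝ := (trueCount (upperPairs n) ω : ℝ)
  have hNp : 0 < N * p := by
    have : (2 : ℝ) ≤ n := by exact_mod_cast hn
    exact mul_pos (by nlinarith) hp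
  have hX : N * p / 2 < X := by
    nlinarith [(abs_lt.1 hXN).1]
  have hE0 : erEdges n ω ≠ ∅ := by
    rw [← nonempty_iff_ne_empty, ← card_pos, ← Nat.cast_pos (α := ℝ), hE]
    linarith
  rw [mixingGap', if_neg hE0]
  calc mixingGap (erEdges n ω) ≤ η * (N * p) / 2 / X := mixingGap_le fun S U hSU ↦ by
        have hSUN : (#S * #U : ℝ) ≤ N := by
          simp only [N]
          exact_mod_cast card_crossPairs hSU ▸ card_le_card (crossPairs_subset_upperPairs hSU)
        have hY := hω _ (crossPairs_mem_crossPairFamily hSU)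
        rw [card_crossPairs hSU, Nat.cast_mul] at hY
        rw [card_filter_erEdges hSU, hE, Fintype.card_fin, h2N]
        exact abs_div_two_mul_sub_div_two_mul_le (by linarith) (pos_of_mul_pos_left hNp hp.le)
          (by positivity) hSUN hY.le hXN.le
    _ < η := by
        rw [div_lt_iff₀ (by linarith)]
        nlinarith [mul_lt_mul_of_pos_left hX hη0]

lemma isProbabilityMeasure_bernoulliPi {p : ℝ} (hp0 : 0 ≤ p) (hp1 : p ≤ 1) :
    IsProbabilityMeasure (bernoulliPi n p) :=
  have := isProbabilityMeasure_berMeasure hp0 hp1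
  Measure.pi.instIsProbabilityMeasure _

lemma measureReal_mixingGap'_ge_le (hn : 2 ≤ n) {p η : ℝ} (hp0 : 0 < p) (hp1 : p ≤ 1)
    (hη0 : 0 < η) (hη1 : η ≤ 1) (hB : n + 2 < n ^ 2 * p * η ^ 3 / 32) :
    (bernoulliPi n p).real {ω | η ≤ mixingGap' (erEdges n ω)}
      ≤ (3 ^ n + 1) * (2 * Real.exp (-(n ^ 2 * p * η ^ 3 / 32))) := by
  have := isProbabilityMeasure_bernoulliPi (n := n) hp0.le hp1
  set t := η * (#(upperPairs n) * p) / 2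
  have hsub : {ω | η ≤ mixingGap' (erEdges n ω)}
      ⊆ ⋃ A ∈ crossPairFamily n, {ω | t ≤ |(trueCount A ω : ℝ) - #A * p|} := by
    intro ω hω
    by_contra h
    simp only [Set.mem_iUnion, not_exists, Set.mem_ofPred_eq, not_le] at h
    exact (mixingGap'_erEdges_lt hn hp0 hη0 hη1 h).not_ge hω
  obtain ⟨ht, hBt, hBN⟩ := chernoff_conditions_of_add_two_lt (card_upperPairs (n := n)) rfl hp0 hp1
    hη0 hη1 hB
  have hBA (A) (hA : A ∈ crossPairFamily n) :
      3 * (#A * p) * (n ^ 2 * p * η ^ 3 / 32) ≤ t ^ 2 := by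
    grw [card_le_card (subset_upperPairs_of_mem_crossPairFamily hA)]
    exact hBN
  calc _ ≤ ∑ A ∈ crossPairFamily n,
        (bernoulliPi n p).real {ω | t ≤ |(trueCount A ω : ℝ) - #A * p|} :=
        (measureReal_mono hsub (measure_ne_top _ _)).trans (measureReal_biUnion_finset_le _ _)
    _ ≤ #(crossPairFamily n) • (2 * Real.exp (-(n ^ 2 * p * η ^ 3 / 32))) :=
        sum_le_card_nsmul _ _ _ fun A hA ↦
          measureReal_abs_trueCount_sub_ge_le hp0.le hp1 A ht hBt (hBA A hA)
    _ ≤ _ := by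
        rw [nsmul_eq_mul]
        gcongr
        exact_mod_cast card_crossPairFamily_le

end ErdosRenyi

/-- Proposition: tail bound for the total mixing gap of Erdős–Rényi
random graphs: `P(W_{G(n,p)} ≥ η) ≤ 3^{n+2} exp(−n²pη³/32)` for `0 < η ≤ 1`. -/
theorem erdosRenyi_mixingGap_tail (n : ℕ) (hn : 2 ≤ n) (p : ℝ) (hp0 : 0 < p)
    (hp1 : p ≤ 1) (η : ℝ) (hη0 : 0 < η) (hη1 : η ≤ 1) :
    bernoulliPi n p {ω | η ≤ mixingGap' (erEdges n ω)} ≤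
      ENNReal.ofReal ((3 : ℝ) ^ (n + 2) * Real.exp (-((n : ℝ) ^ 2 * p * η ^ 3) / 32)) := by
  have := isProbabilityMeasure_bernoulliPi (n := n) hp0.le hp1
  rw [neg_div]
  rcases le_or_gt (n ^ 2 * p * η ^ 3 / 32) ((n + 2 : ℕ) : ℝ) with hB | hB
  · exact prob_le_one.trans (ENNReal.one_le_ofReal.2 (one_le_three_pow_mul_exp_neg hB))
  rw [← ofReal_measureReal]
  refine ENNReal.ofReal_le_ofReal
    ((measureReal_mixingGap'_ge_le hn hp0 hp1 hη0 hη1 (by exact_mod_cast hB)).trans ?_)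
  have : (1 : ℝ) ≤ 3 ^ n := one_le_pow₀ (by norm_num)
  rw [pow_add]
  nlinarith [Real.exp_pos (-(n ^ 2 * p * η ^ 3 / 32))]
end
end

section
/- Let S ∈ ℝ^{d×d} be an irreducible row-stochastic matrix (nonnegative entries, each row summing to 1, and for every pair (i,j) there exists k ≥ 1 with (S^k)_{ij} > 0), and let π ∈ ℝ^d be its unique invariant probability vector (Sᵀπ = π, π has nonnegative entries summing to 1). Then every complex eigenvalue λ of the matrix A = (I − Sᵀ) + π𝟙ᵀ (where 𝟙 is the all-ones vector) satisfies Re(λ) > 0; consequently, the Lyapunov equation ΠA + AᵀΠ = I admits a symmetric positive definite solution Π ∈ ℝ^{d×d}. -/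
/-!
Write `T = Sᵀ`, so that `A = 1 - T + π𝟙ᵀ` with `T` column-stochastic and irreducible. The columns
of `A` sum to one, so an eigenvector `v` of `A` with eigenvalue `λ` satisfies `λ ∑ v = ∑ v`:
either `λ = 1`, or `∑ v = 0` and then `T v = (1 - λ) v`. In the latter case `‖1 - λ‖ ≤ 1`, since
`T` contracts the `ℓ¹` norm, so `Re λ ≤ 0` would force `λ = 0`; but an irreducible stochastic
matrix has no nonzero fixed vector of sum zero (its positive and negative parts would both be
strictly positive fixed vectors).

For the Lyapunov equation, the Cayley transform `C = (1 - A)(1 + A)⁻¹` maps the right half-plane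
spectrum of `A` into the open unit disc, so by Gelfand's formula `∑ ‖Cᵏ‖` converges and
`P = ∑ (Cᵏ)ᵀ Q Cᵏ` solves the Stein equation `P = Q + Cᵀ P C` with `P` positive definite.
Choosing `Q = ((1 + A)⁻¹)ᵀ (1 + A)⁻¹` and conjugating by `1 + A` gives `2 (P A + Aᵀ P) = 1`.
-/

open Matrix Filter
open scoped ENNReal

namespace Complex

lemma eq_one_of_norm_le_one_of_one_le_re {z : ℂ} (hz : ‖z‖ ≤ 1) (hre : 1 ≤ z.re) : z = 1 := by
  have hre1 : z.re = 1 := le_antisymm ((re_le_norm z).trans hz) hre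
  have hnormSq : z.re * z.re + z.im * z.im ≤ 1 := by
    rw [← normSq_apply, ← Complex.sq_norm]
    nlinarith [norm_nonneg z]
  exact ext hre1 (by simp; nlinarith)

lemma norm_lt_one_of_re_div_pos {μ : ℂ} (h : 0 < ((1 - μ) / (1 + μ)).re) : ‖μ‖ < 1 := by
  have hre : ((1 - μ) / (1 + μ)).re = (1 - ‖μ‖ ^ 2) / normSq (1 + μ) := by
    rw [div_re, Complex.sq_norm, ← add_div]
    simp only [sub_re, one_re, add_re, sub_im, one_im, add_im, normSq_apply]
    ring
  rw [hre] at h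
  obtain ⟨hnum, -⟩ | ⟨-, hden⟩ := div_pos_iff.mp h
  · nlinarith [norm_nonneg μ]
  · exact absurd hden (normSq_nonneg _).not_gt

end Complex

namespace spectrum

/-- The spectrum of the Cayley transform `c = (1 - a)(1 + a)⁻¹`. -/
lemma div_mem_of_mul_one_add_eq_one_sub {𝕜 B : Type*} [Field 𝕜] [NeZero (2 : 𝕜)] [Ring B]
    [Algebra 𝕜 B] {a c : B} (ha : IsUnit (1 + a)) (hc : c * (1 + a) = 1 - a) {μ : 𝕜}
    (hμ : μ ∈ spectrum 𝕜 c) : (1 - μ) / (1 + μ) ∈ spectrum 𝕜 a := by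
  obtain ⟨u, hu⟩ := ha
  have hfactor : (algebraMap 𝕜 B μ - c) * u = algebraMap 𝕜 B (μ - 1) + (μ + 1) • a := by
    rw [hu, sub_mul, hc, Algebra.algebraMap_eq_smul_one, Algebra.algebraMap_eq_smul_one]
    simp only [smul_mul_assoc, one_mul, mul_add, mul_one, sub_smul, add_smul, one_smul]
    abel
  rw [mem_iff, ← Units.isUnit_mul_units _ u, hfactor] at hμ
  refine mem_iff.mpr fun hunit => hμ ?_
  by_cases hμ1 : μ + 1 = 0
  · rw [hμ1, zero_smul, add_zero, show μ - 1 = -2 by linear_combination hμ1]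
    exact (IsUnit.mk0 _ (neg_ne_zero.mpr two_ne_zero)).map _
  · convert ((IsUnit.mk0 _ (neg_ne_zero.mpr hμ1)).map (algebraMap 𝕜 B)).mul hunit using 1
    have h1μ : 1 + μ ≠ 0 := by rwa [add_comm]
    rw [mul_sub, ← map_mul, ← Algebra.smul_def,
      show -(μ + 1) * ((1 - μ) / (1 + μ)) = μ - 1 by field_simp; ring, neg_smul, sub_neg_eq_add]

variable {A : Type*} [NormedRing A] [NormedAlgebra ℂ A] [CompleteSpace A]

lemma spectralRadius_lt_one_of_forall_norm_lt_one {a : A} (h : ∀ z ∈ spectrum ℂ a, ‖z‖ < 1) :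
    spectralRadius ℂ a < 1 := by
  rcases (spectrum ℂ a).eq_empty_or_nonempty with hempty | hne
  · simp [spectralRadius, hempty]
  · exact_mod_cast spectralRadius_lt_of_forall_lt_of_nonempty hne (r := 1) fun z hz => by
      exact_mod_cast h z hz

lemma summable_norm_pow_of_spectralRadius_lt_one {a : A} (h : spectralRadius ℂ a < 1) :
    Summable fun k => ‖a ^ k‖ := by
  obtain ⟨r, hρr, hr1⟩ := ENNReal.lt_iff_exists_nnreal_btwn.mp h
  have hr1 : (r : ℝ) < 1 := by exact_mod_cast hr1
  refine .of_norm_bounded_eventually_nat (summable_geometric_of_lt_one r.coe_nonneg hr1) ?_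
  filter_upwards [(pow_nnnorm_pow_one_div_tendsto_nhds_spectralRadius a).eventually_lt_const hρr,
    eventually_ne_atTop 0] with k hk hk0
  have hle : (‖a ^ k‖₊ : ℝ≥0∞) ≤ (r : ℝ≥0∞) ^ (k : ℝ) :=
    (ENNReal.rpow_inv_le_iff (by positivity)).mp (by simpa only [one_div] using hk.le)
  rw [ENNReal.rpow_natCast, ← ENNReal.coe_pow, ENNReal.coe_le_coe] at hle
  simpa using NNReal.coe_le_coe.mpr hle

end spectrum

namespace Matrix

section Stochastic

variable {n : Type*} [Fintype n]

lemma re_map_ofReal_mulVec (T : Matrix n n ℝ) (v : n → ℂ) (j : n) :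
    ((T.map Complex.ofReal *ᵥ v) j).re = (T *ᵥ fun i => (v i).re) j := by
  simp [mulVec, dotProduct, Complex.re_sum]

lemma im_map_ofReal_mulVec (T : Matrix n n ℝ) (v : n → ℂ) (j : n) :
    ((T.map Complex.ofReal *ᵥ v) j).im = (T *ᵥ fun i => (v i).im) j := by
  simp [mulVec, dotProduct, Complex.im_sum]

variable [DecidableEq n]

lemma exists_mulVec_eq_smul_of_mem_spectrum {K : Type*} [Field K] {N : Matrix n n K} {μ : K}
    (hμ : μ ∈ spectrum K N) : ∃ v, v ≠ 0 ∧ N *ᵥ v = μ • v := by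
  rw [← spectrum_toLin', ← Module.End.hasEigenvalue_iff_mem_spectrum] at hμ
  obtain ⟨v, hv⟩ := hμ.exists_hasEigenvector
  exact ⟨v, hv.2, by simpa using hv.apply_eq_smul⟩

variable {T : Matrix n n ℝ}

lemma IsIrreducible.pos_of_mulVec_eq_self (hT : T.IsIrreducible) {u : n → ℝ} (hu : 0 ≤ u)
    (hfix : T *ᵥ u = u) (hne : u ≠ 0) (j : n) : 0 < u j := by
  obtain ⟨i, hi⟩ := Function.ne_iff.mp hne
  obtain ⟨k, -, hk⟩ := (isIrreducible_iff_exists_pow_pos hT.nonneg).mp hT j i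
  have hpow : ∀ m : ℕ, T ^ m *ᵥ u = u := fun m => by
    induction m with
    | zero => simp
    | succ m ih => rw [pow_succ, ← mulVec_mulVec, hfix, ih]
  calc 0 < (T ^ k) j i * u i := mul_pos hk ((hu i).lt_of_ne' hi)
    _ ≤ ∑ l, (T ^ k) j l * u l := Finset.single_le_sum
        (fun l _ => mul_nonneg (pow_apply_nonneg hT.nonneg k j l) (hu l)) (Finset.mem_univ i)
    _ = u j := congrFun (hpow k) j

lemma abs_mulVec_eq_self (hT : T ∈ colStochastic ℝ n) {w : n → ℝ} (hfix : T *ᵥ w = w) :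
    T *ᵥ |w| = |w| := by
  have hle : ∀ j, |w j| ≤ (T *ᵥ |w|) j := fun j => by
    calc |w j| = |(T *ᵥ w) j| := by rw [hfix]
      _ ≤ ∑ i, |T j i * w i| := Finset.abs_sum_le_sum_abs _ _
      _ = (T *ᵥ |w|) j := by
        simp [mulVec, dotProduct, abs_mul, abs_of_nonneg (nonneg_of_mem_colStochastic hT)]
  funext j
  exact ((Finset.sum_eq_sum_iff_of_le fun j _ => hle j).mp
    (sum_mulVec_of_mem_colStochastic hT).symm j (Finset.mem_univ j)).symm

lemma eq_zero_of_mulVec_eq_self_of_sum_eq_zero (hT : T ∈ colStochastic ℝ n)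
    (hirr : T.IsIrreducible) {w : n → ℝ} (hfix : T *ᵥ w = w) (hsum : ∑ i, w i = 0) :
    w = 0 := by
  by_contra hw
  obtain ⟨i, hi⟩ := Function.ne_iff.mp hw
  have habs := abs_mulVec_eq_self hT hfix
  have hmass : 0 < ∑ j, |w j| :=
    Finset.sum_pos' (fun j _ => abs_nonneg _) ⟨i, Finset.mem_univ i, abs_pos.mpr hi⟩
  -- `|w| + w` and `|w| - w` are nonnegative fixed vectors of mass `∑ |w| > 0`, hence both
  -- strictly positive, which fails at any coordinate.
  have hplus := hirr.pos_of_mulVec_eq_self (u := |w| + w)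
    (fun j => neg_le_iff_add_nonneg.mp (neg_le_abs (w j))) (by rw [mulVec_add, habs, hfix])
    (fun h => hmass.ne' (by simpa [Finset.sum_add_distrib, hsum] using congrArg (∑ j, · j) h)) i
  have hminus := hirr.pos_of_mulVec_eq_self (u := |w| - w)
    (fun j => sub_nonneg.mpr (le_abs_self (w j))) (by rw [mulVec_sub, habs, hfix])
    (fun h => hmass.ne' (by simpa [Finset.sum_sub_distrib, hsum] using congrArg (∑ j, · j) h)) i
  simp only [Pi.add_apply, Pi.sub_apply, Pi.abs_apply] at hplus hminus
  rcases abs_choice (w i) with h | h <;> rw [h] at hplus hminus <;> linarith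

lemma eq_zero_of_map_mulVec_eq_self_of_sum_eq_zero (hT : T ∈ colStochastic ℝ n)
    (hirr : T.IsIrreducible) {v : n → ℂ} (hfix : T.map Complex.ofReal *ᵥ v = v)
    (hsum : ∑ i, v i = 0) : v = 0 := by
  have hre := eq_zero_of_mulVec_eq_self_of_sum_eq_zero hT hirr (w := fun i => (v i).re)
    (funext fun j => by rw [← re_map_ofReal_mulVec, hfix])
    (by rw [← Complex.re_sum, hsum, Complex.zero_re])
  have him := eq_zero_of_mulVec_eq_self_of_sum_eq_zero hT hirr (w := fun i => (v i).im)
    (funext fun j => by rw [← im_map_ofReal_mulVec, hfix])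
    (by rw [← Complex.im_sum, hsum, Complex.zero_im])
  funext i
  exact Complex.ext (congrFun hre i) (congrFun him i)

lemma sum_map_ofReal_mulVec (hT : T ∈ colStochastic ℝ n) (v : n → ℂ) :
    ∑ j, (T.map Complex.ofReal *ᵥ v) j = ∑ j, v j := by
  simp only [mulVec, dotProduct, map_apply]
  rw [Finset.sum_comm]
  refine Finset.sum_congr rfl fun i _ => ?_
  rw [← Finset.sum_mul, ← Complex.ofReal_sum, sum_col_of_mem_colStochastic hT,
    Complex.ofReal_one, one_mul]

lemma norm_le_one_of_map_mulVec_eq_smul (hT : T ∈ colStochastic ℝ n) {v : n → ℂ} {μ : ℂ}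
    (hv : T.map Complex.ofReal *ᵥ v = μ • v) (hv0 : v ≠ 0) : ‖μ‖ ≤ 1 := by
  obtain ⟨i, hi⟩ := Function.ne_iff.mp hv0
  have hmass : 0 < ∑ j, ‖v j‖ :=
    Finset.sum_pos' (fun j _ => norm_nonneg _) ⟨i, Finset.mem_univ i, norm_pos_iff.mpr hi⟩
  have hle : ∀ j, ‖μ‖ * ‖v j‖ ≤ (T *ᵥ fun i => ‖v i‖) j := fun j => by
    calc ‖μ‖ * ‖v j‖ = ‖(T.map Complex.ofReal *ᵥ v) j‖ := by rw [hv, Pi.smul_apply, norm_smul]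
      _ ≤ ∑ i, ‖(T j i : ℂ) * v i‖ := norm_sum_le _ _
      _ = (T *ᵥ fun i => ‖v i‖) j := by
        simp [mulVec, dotProduct, abs_of_nonneg (nonneg_of_mem_colStochastic hT)]
  have hsum := Finset.sum_le_sum fun j (_ : j ∈ Finset.univ) => hle j
  rw [← Finset.mul_sum, sum_mulVec_of_mem_colStochastic hT] at hsum
  exact (mul_le_iff_le_one_left hmass).mp hsum

lemma map_ofReal_mulVec_sub_add_rankOne (π : n → ℝ) (v : n → ℂ) :
    (1 - T + of fun i _ => π i).map Complex.ofReal *ᵥ v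
      = v - T.map Complex.ofReal *ᵥ v + (∑ i, v i) • fun i => (π i : ℂ) := by
  rw [Matrix.map_add _ Complex.ofReal_add, Matrix.map_sub _ Complex.ofReal_sub,
    Matrix.map_one _ Complex.ofReal_zero Complex.ofReal_one, add_mulVec, sub_mulVec, one_mulVec]
  congr 1
  funext j
  simp [mulVec, dotProduct, Finset.mul_sum, mul_comm]

theorem re_pos_of_mem_spectrum_sub_add_rankOne (hT : T ∈ colStochastic ℝ n)
    (hirr : T.IsIrreducible) {π : n → ℝ} (hπ : ∑ i, π i = 1) {lam : ℂ}
    (hlam : lam ∈ spectrum ℂ ((1 - T + of fun i _ => π i).map Complex.ofReal)) :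
    0 < lam.re := by
  obtain ⟨v, hv0, hv⟩ := exists_mulVec_eq_smul_of_mem_spectrum hlam
  rw [map_ofReal_mulVec_sub_add_rankOne] at hv
  have hsum : lam * ∑ i, v i = ∑ i, v i := by
    have := congrArg (∑ j, · j) hv
    simp only [Pi.add_apply, Pi.sub_apply, Pi.smul_apply, smul_eq_mul, Finset.sum_add_distrib,
      Finset.sum_sub_distrib, sum_map_ofReal_mulVec hT, ← Finset.mul_sum, ← Complex.ofReal_sum,
      hπ] at this
    simpa using this.symm
  by_cases ht : ∑ i, v i = 0
  · rw [ht, zero_smul, add_zero] at hv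
    have heig : T.map Complex.ofReal *ᵥ v = (1 - lam) • v := by
      rw [sub_smul, one_smul, ← hv]
      abel
    by_contra hre
    have hone := Complex.eq_one_of_norm_le_one_of_one_le_re
      (norm_le_one_of_map_mulVec_eq_smul hT heig hv0) (by simp; linarith)
    rw [hone, one_smul] at heig
    exact hv0 (eq_zero_of_map_mulVec_eq_self_of_sum_eq_zero hT hirr heig ht)
  · rw [(mul_left_eq_self₀.mp hsum).resolve_right ht]
    exact one_pos

end Stochastic

section Lyapunov

open scoped Matrix.Norms.Frobenius ComplexOrder

variable {n 𝕜 : Type*} [Fintype n] [RCLike 𝕜]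

lemma posSemidef_tsum {ι : Type*} {f : ι → Matrix n n 𝕜} (hf : ∀ i, (f i).PosSemidef) :
    (∑' i, f i).PosSemidef := by
  by_cases hs : Summable f
  swap
  · rw [tsum_eq_zero_of_not_summable hs]
    exact .zero
  refine posSemidef_iff_dotProduct_mulVec.mpr ⟨?_, fun x => ?_⟩
  · rw [IsHermitian, conjTranspose_tsum]
    exact tsum_congr fun i => (hf i).isHermitian
  · let q : Matrix n n 𝕜 →+ 𝕜 :=
      AddMonoidHom.mk' (fun M => star x ⬝ᵥ (M *ᵥ x)) fun M N => by
        rw [add_mulVec, dotProduct_add]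
    have hq : Continuous q :=
      continuous_const.dotProduct (continuous_id.matrix_mulVec continuous_const)
    exact (hs.hasSum.map q hq).nonneg fun i => (posSemidef_iff_dotProduct_mulVec.mp (hf i)).2 x

variable [DecidableEq n]

theorem exists_posDef_eq_add_conjTranspose_mul_mul {C Q : Matrix n n 𝕜}
    (hC : Summable fun k => ‖C ^ k‖) (hQ : Q.PosDef) :
    ∃ P : Matrix n n 𝕜, P.PosDef ∧ P = Q + Cᴴ * P * C := by
  set f : ℕ → Matrix n n 𝕜 := fun k => (C ^ k)ᴴ * Q * C ^ k with hf
  have hf0 : f 0 = Q := by simp [hf]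
  have hstep : ∀ k, f (k + 1) = Cᴴ * f k * C := fun k => by
    simp only [hf, pow_succ, conjTranspose_mul, mul_assoc]
  have hsum : Summable f := by
    refine .of_norm_bounded (hC.mul_left (‖Q‖ * ∑' j, ‖C ^ j‖)) fun k => ?_
    calc ‖f k‖ ≤ ‖(C ^ k)ᴴ‖ * ‖Q‖ * ‖C ^ k‖ := norm_mul₃_le
      _ = ‖Q‖ * ‖C ^ k‖ * ‖C ^ k‖ := by rw [frobenius_norm_conjTranspose]; ring
      _ ≤ ‖Q‖ * (∑' j, ‖C ^ j‖) * ‖C ^ k‖ := by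
        gcongr
        exact hC.le_tsum k fun j _ => norm_nonneg _
  have htail : ∑' k, f (k + 1) = Cᴴ * (∑' k, f k) * C := by
    simp_rw [hstep]
    rw [(hsum.mul_left Cᴴ).tsum_mul_right, hsum.tsum_mul_left]
  refine ⟨∑' k, f k, ?_, ?_⟩
  · rw [hsum.tsum_eq_zero_add, hf0]
    exact hQ.add_posSemidef
      (posSemidef_tsum fun k => hQ.posSemidef.conjTranspose_mul_mul_same (C ^ (k + 1)))
  · nth_rw 1 [hsum.tsum_eq_zero_add]
    rw [hf0, htail]

lemma two_smul_mul_add_transpose_mul_eq_one {R : Type*} [CommRing R] {A C N P : Matrix n n R}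
    (hN : N * (1 + A) = 1) (hC : C * (1 + A) = 1 - A) (hP : P = Nᵀ * N + Cᵀ * P * C) :
    (2 : R) • P * A + Aᵀ * ((2 : R) • P) = 1 := by
  have hconj : (1 + A)ᵀ * P * (1 + A) = 1 + (1 - A)ᵀ * P * (1 - A) := by
    calc (1 + A)ᵀ * P * (1 + A)
        = (N * (1 + A))ᵀ * (N * (1 + A)) + (C * (1 + A))ᵀ * P * (C * (1 + A)) := by
          nth_rw 1 [hP]
          rw [transpose_mul N, transpose_mul C]
          noncomm_ring
      _ = 1 + (1 - A)ᵀ * P * (1 - A) := by rw [hN, hC, transpose_one, one_mul]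
  calc (2 : R) • P * A + Aᵀ * ((2 : R) • P)
      = (1 + A)ᵀ * P * (1 + A) - (1 - A)ᵀ * P * (1 - A) := by
        simp only [two_smul, transpose_add, transpose_sub, transpose_one]
        noncomm_ring
    _ = 1 := by rw [hconj, add_sub_cancel_right]

lemma ofReal_mem_spectrum_map_ofReal {A : Matrix n n ℝ} {r : ℝ} (hr : r ∈ spectrum ℝ A) :
    (r : ℂ) ∈ spectrum ℂ (A.map Complex.ofReal) := by
  rw [mem_spectrum_iff_isRoot_charpoly] at hr ⊢
  exact charpoly_map A Complex.ofRealHom ▸ hr.map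

theorem exists_posDef_mul_add_transpose_mul_eq_one {A : Matrix n n ℝ}
    (hA : ∀ lam ∈ spectrum ℂ (A.map Complex.ofReal), 0 < lam.re) :
    ∃ P : Matrix n n ℝ, P.PosDef ∧ P * A + Aᵀ * P = 1 := by
  let φ : Matrix n n ℝ →+* Matrix n n ℂ := Complex.ofRealHom.mapMatrix
  have hM : IsUnit (1 + A) := by
    have h : (-1 : ℝ) ∉ spectrum ℝ A := fun h => by
      have := hA _ (ofReal_mem_spectrum_map_ofReal h)
      norm_num at this
    rw [spectrum.notMem_iff] at h
    simpa [Algebra.algebraMap_eq_smul_one, add_comm] using h.neg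
  set N := (1 + A)⁻¹
  have hNM : N * (1 + A) = 1 := nonsing_inv_mul _ ((isUnit_iff_isUnit_det _).mp hM)
  set C := (1 - A) * N
  have hC : C * (1 + A) = 1 - A := by rw [mul_assoc, hNM, mul_one]
  have hMc : IsUnit (1 + φ A) := by simpa only [map_add, map_one] using hM.map φ
  have hCc : φ C * (1 + φ A) = 1 - φ A := by
    simpa only [map_mul, map_add, map_sub, map_one] using congrArg φ hC
  have hdisc : ∀ μ ∈ spectrum ℂ (φ C), ‖μ‖ < 1 := fun μ hμ =>
    Complex.norm_lt_one_of_re_div_pos <| hA _ <|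
      spectrum.div_mem_of_mul_one_add_eq_one_sub hMc hCc hμ
  have hsum : Summable fun k => ‖C ^ k‖ := by
    refine (spectrum.summable_norm_pow_of_spectralRadius_lt_one
      (spectrum.spectralRadius_lt_one_of_forall_norm_lt_one hdisc)).congr fun k => ?_
    rw [← map_pow]
    exact frobenius_norm_map_eq _ _ Complex.norm_real
  obtain ⟨P, hP, hPeq⟩ := exists_posDef_eq_add_conjTranspose_mul_mul hsum
    (PosDef.one.conjTranspose_mul_mul_same
      (mulVec_injective_iff_isUnit.mpr (isUnit_nonsing_inv_iff.mpr hM)) : (Nᴴ * 1 * N).PosDef)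
  simp only [conjTranspose_eq_transpose_of_trivial, mul_one] at hPeq
  exact ⟨(2 : ℝ) • P, hP.smul two_pos, two_smul_mul_add_transpose_mul_eq_one hNM hC hPeq⟩

end Lyapunov

end Matrix

theorem lyapunov_eq_solvable_of_irreducible_stochastic_general (d : ℕ)
    (S : Matrix (Fin d) (Fin d) ℝ)
    (hS0 : ∀ i j, 0 ≤ S i j) (hSrow : ∀ i, ∑ j, S i j = 1)
    (hirr : ∀ i j : Fin d, ∃ k : ℕ, 1 ≤ k ∧ 0 < (S ^ k) i j)
    (π : Fin d → ℝ) (hπ1 : ∑ i, π i = 1)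
    (A : Matrix (Fin d) (Fin d) ℝ)
    (hA : A = (1 - Sᵀ) + Matrix.of fun i _ => π i) :
    (∀ lam : ℂ, lam ∈ spectrum ℂ (A.map Complex.ofReal) → 0 < lam.re) ∧
    ∃ Pmat : Matrix (Fin d) (Fin d) ℝ, Pmat.IsSymm ∧ Pmat.PosDef ∧ Pmat * A + Aᵀ * Pmat = 1 := by
  have hT : Sᵀ ∈ colStochastic ℝ (Fin d) := transpose_mem_colStochastic_iff_mem_rowStochastic.mpr
    (mem_rowStochastic_iff_sum.mpr ⟨hS0, hSrow⟩)
  have hTirr : Sᵀ.IsIrreducible := ((isIrreducible_iff_exists_pow_pos hS0).mpr hirr).transpose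
  have hspec : ∀ lam ∈ spectrum ℂ (A.map Complex.ofReal), 0 < lam.re := fun lam hlam =>
    re_pos_of_mem_spectrum_sub_add_rankOne hT hTirr hπ1 (hA ▸ hlam)
  obtain ⟨P, hP, hPA⟩ := exists_posDef_mul_add_transpose_mul_eq_one hspec
  exact ⟨hspec, P, hP.isHermitian, hP, hPA⟩

/-- spectral fact behind the quadratic Lyapunov function for forgetful
PIN models. If `S` is an irreducible row-stochastic matrix with invariant probability
vector `π`, then every complex eigenvalue of `A = (I − Sᵀ) + π𝟙ᵀ` has positive real part,
and consequently the Lyapunov equation `ΠA + AᵀΠ = I` has a symmetric positive definite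
solution. -/
theorem lyapunov_eq_solvable_of_irreducible_stochastic (d : ℕ) (hd : 1 ≤ d)
    (S : Matrix (Fin d) (Fin d) ℝ)
    (hS0 : ∀ i j, 0 ≤ S i j) (hSrow : ∀ i, ∑ j, S i j = 1)
    (hirr : ∀ i j : Fin d, ∃ k : ℕ, 1 ≤ k ∧ 0 < (S ^ k) i j)
    (π : Fin d → ℝ) (hπ0 : ∀ i, 0 ≤ π i) (hπ1 : ∑ i, π i = 1)
    (hπinv : Sᵀ *ᵥ π = π)
    (A : Matrix (Fin d) (Fin d) ℝ)
    (hA : A = (1 - Sᵀ) + Matrix.of fun i _ => π i) :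
    (∀ lam : ℂ, lam ∈ spectrum ℂ (A.map Complex.ofReal) → 0 < lam.re) ∧
    ∃ Pmat : Matrix (Fin d) (Fin d) ℝ, Pmat.IsSymm ∧ Pmat.PosDef ∧ Pmat * A + Aᵀ * Pmat = 1 :=
  lyapunov_eq_solvable_of_irreducible_stochastic_general d S hS0 hSrow hirr π hπ1 A hA
end

section
/- Let b > 0 and c > 0, and for α > 0 define p_α(z) = α + (b − c − α)z − bz². Then for every α > 0 the polynomial p_α has a unique zero z*(α) in the interval [0,1], and z*(α) → max{1 − c/b, 0} as α → 0⁺. -/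
/-- SIS drift polynomial. For `b, c > 0` and `α > 0`, the polynomial
`p_α(z) = α + (b − c − α)z − bz²` has a unique zero `z*(α)` in `[0,1]`, and
`z*(α) → max{1 − c/b, 0}` as `α → 0⁺`. -/
theorem sis_unique_root_and_limit (b c : ℝ) (hb : 0 < b) (hc : 0 < c) :
    (∀ α > (0 : ℝ), ∃! z : ℝ, z ∈ Set.Icc (0 : ℝ) 1 ∧
      α + (b - c - α) * z - b * z ^ 2 = 0) ∧
    ∀ zstar : ℝ → ℝ,
      (∀ α > (0 : ℝ), zstar α ∈ Set.Icc (0 : ℝ) 1 ∧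
        α + (b - c - α) * zstar α - b * (zstar α) ^ 2 = 0) →
      Filter.Tendsto zstar (nhdsWithin 0 (Set.Ioi 0)) (nhds (max (1 - c / b) 0)) := by
  set f : ℝ → ℝ := fun α => ((b - c - α) + Real.sqrt ((b - c - α) ^ 2 + 4 * b * α)) / (2 * b)
    with hf
  -- uniqueness of roots in [0,1]
  have huniq : ∀ α > (0 : ℝ), ∀ z₁ z₂ : ℝ, 0 ≤ z₁ → 0 ≤ z₂ →
      α + (b - c - α) * z₁ - b * z₁ ^ 2 = 0 →
      α + (b - c - α) * z₂ - b * z₂ ^ 2 = 0 → z₁ = z₂ := by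
    intro α hα z₁ z₂ h₁ h₂ e₁ e₂
    have key : (z₁ - z₂) * (α + b * (z₁ * z₂)) = 0 := by
      linear_combination z₁ * e₂ - z₂ * e₁
    have hpos : 0 < α + b * (z₁ * z₂) :=
      add_pos_of_pos_of_nonneg hα (by positivity)
    have := mul_eq_zero.mp key
    rcases this with h | h
    · linarith
    · linarith
  -- f α is a root in [0,1]
  have hroot : ∀ α > (0 : ℝ), f α ∈ Set.Icc (0 : ℝ) 1 ∧
      α + (b - c - α) * f α - b * (f α) ^ 2 = 0 := by
    intro α hα
    have hargnn : (0 : ℝ) ≤ (b - c - α) ^ 2 + 4 * b * α := by positivity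
    set s := Real.sqrt ((b - c - α) ^ 2 + 4 * b * α) with hs
    have hs2 : s ^ 2 = (b - c - α) ^ 2 + 4 * b * α := Real.sq_sqrt hargnn
    have hsnn : 0 ≤ s := Real.sqrt_nonneg _
    have hsge : -(b - c - α) ≤ s := by
      nlinarith [hs2, hsnn, sq_nonneg (s + (b - c - α))]
    have hsle : s ≤ b + c + α := by
      have h1 : s ≤ Real.sqrt ((b + c + α) ^ 2) := by
        apply Real.sqrt_le_sqrt
        nlinarith
      rwa [Real.sqrt_sq (by positivity)] at h1
    constructor
    · constructor
      · apply div_nonneg _ (by positivity)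
        linarith
      · rw [div_le_one (by positivity)]
        linarith
    · have hb' : (2 : ℝ) * b ≠ 0 := by positivity
      show α + (b - c - α) * (((b - c - α) + s) / (2 * b)) -
          b * ((((b - c - α) + s) / (2 * b)) ^ 2) = 0
      field_simp
      nlinarith [hs2]
  constructor
  · intro α hα
    exact ⟨f α, hroot α hα, fun y hy =>
      huniq α hα y (f α) hy.1.1 (hroot α hα).1.1 hy.2 (hroot α hα).2⟩
  · intro zstar hz
    -- zstar agrees with f on (0,∞)
    have heq : ∀ α ∈ Set.Ioi (0 : ℝ), zstar α = f α := fun α hα =>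
      huniq α hα (zstar α) (f α) (hz α hα).1.1 (hroot α hα).1.1 (hz α hα).2 (hroot α hα).2
    -- f is continuous and f 0 = max (1 - c/b) 0
    have hcont : Continuous f := by
      apply Continuous.div_const
      exact (continuous_const.sub continuous_id).add
        (Real.continuous_sqrt.comp (by continuity))
    have hf0 : f 0 = max (1 - c / b) 0 := by
      simp only [hf]
      rw [mul_zero, add_zero, Real.sqrt_sq_eq_abs]
      rcases le_or_gt c b with h | h
      · rw [show b - c - 0 = b - c by ring, abs_of_nonneg (by linarith)]
        rw [max_eq_left (by rw [sub_nonneg, div_le_one hb]; linarith)]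
        field_simp
        ring
      · rw [show b - c - 0 = b - c by ring, abs_of_neg (by linarith)]
        rw [max_eq_right (by rw [sub_nonpos, le_div_iff₀ hb]; nlinarith)]
        simp
    have htends : Filter.Tendsto f (nhdsWithin 0 (Set.Ioi 0)) (nhds (max (1 - c / b) 0)) := by
      rw [← hf0]
      exact (hcont.tendsto 0).mono_left nhdsWithin_le_nhds
    apply htends.congr'
    filter_upwards [self_mem_nhdsWithin] with α hα
    exact (heq α hα).symm
end
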